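/- arXiv:1809.06017 — 9 statements merged into one kernel-verified Lean document; each statement's English description precedes it below -/
import Mathlib

section
/- For any traceless matrix M ∈ ℂ^{d×d}, there exists an orthonormal basis {u_1,...,u_d} of ℂ^d such that ⟨u_i| M |u_i⟩ = 0 for all i. -/
open Matrix

/-!
Toeplitz–Hausdorff in the form needed here: for orthonormal `x, y`, every point of the segment
between `⟪x, T x⟫` and `⟪y, T y⟫` is `⟪z, T z⟫` for a unit vector `z` in their span. Merging
the vectors of an orthonormal basis one at a time, the average `trace T / n` of the diagonal
entries is attained by a unit vector `v`. If `trace T = 0` then `⟪v, T v⟫ = 0`, and the compression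
of `T` to `vᗮ` is again traceless, so induction on the dimension finishes the argument.
-/

open Module Submodule Set
open scoped InnerProductSpace ComplexConjugate

/-- `Im (u B + ū C) = Im (u (B - C̄))`, so it suffices to rotate `B - C̄` onto the real axis. -/
lemma Complex.exists_norm_eq_one_im_mul_add_conj_mul_eq_zero (B C : ℂ) :
    ∃ u : ℂ, ‖u‖ = 1 ∧ (u * B + conj u * C).im = 0 := by
  set D := B - conj C
  set u := Complex.exp (-(D.arg * Complex.I))
  have huD : u * D = ‖D‖ := by
    conv_lhs => rw [← Complex.norm_mul_exp_arg_mul_I D]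
    rw [mul_left_comm, ← Complex.exp_add, neg_add_cancel, Complex.exp_zero, mul_one]
  refine ⟨u, by simpa [u] using Complex.norm_exp_ofReal_mul_I (-D.arg), ?_⟩
  calc (u * B + conj u * C).im = (u * D).im := by
        simp only [D, Complex.add_im, Complex.mul_im, Complex.sub_re, Complex.sub_im,
          Complex.conj_re, Complex.conj_im]
        ring
    _ = 0 := by rw [huD, Complex.ofReal_im]

lemma Real.exists_cos_sq_add_mul_cos_mul_sin_eq (μ : ℝ) {s : ℝ} (hs₀ : 0 ≤ s) (hs₁ : s ≤ 1) :
    ∃ θ : ℝ, Real.cos θ ^ 2 + μ * Real.cos θ * Real.sin θ = s := by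
  have hcont : Continuous fun θ => Real.cos θ ^ 2 + μ * Real.cos θ * Real.sin θ := by fun_prop
  obtain ⟨θ, -, hθ⟩ := intermediate_value_Icc' (by positivity : (0 : ℝ) ≤ Real.pi / 2)
    hcont.continuousOn (by simpa using And.intro hs₀ hs₁)
  exact ⟨θ, hθ⟩

section Complex

variable {E : Type*} [NormedAddCommGroup E] [InnerProductSpace ℂ E]

/-- Take `a = cos θ` and `b = u sin θ`: the phase `u` makes the off-diagonal contribution a real
multiple `μ` of `⟪x, T x⟫ - ⟪y, T y⟫`, and then `θ` solves `cos² θ + μ cos θ sin θ = s`. -/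
theorem exists_unit_smul_add_smul_inner_map_self_eq_convex_comb (T : E →ₗ[ℂ] E) {x y : E}
    (hx : ‖x‖ = 1) (hy : ‖y‖ = 1) (hxy : ⟪x, y⟫_ℂ = 0) {s : ℝ} (hs₀ : 0 ≤ s) (hs₁ : s ≤ 1) :
    ∃ a b : ℂ, ‖a • x + b • y‖ = 1 ∧
      ⟪a • x + b • y, T (a • x + b • y)⟫_ℂ = s * ⟪x, T x⟫_ℂ + (1 - s) * ⟪y, T y⟫_ℂ := by
  by_cases hdiag : ⟪x, T x⟫_ℂ = ⟪y, T y⟫_ℂ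
  · exact ⟨1, 0, by simpa using hx, by simp [hdiag]; ring⟩
  set w := ⟪x, T x⟫_ℂ - ⟪y, T y⟫_ℂ
  have hw : w ≠ 0 := sub_ne_zero.mpr hdiag
  obtain ⟨u, hu, him⟩ := Complex.exists_norm_eq_one_im_mul_add_conj_mul_eq_zero
    (⟪x, T y⟫_ℂ / w) (⟪y, T x⟫_ℂ / w)
  set μ := (u * (⟪x, T y⟫_ℂ / w) + conj u * (⟪y, T x⟫_ℂ / w)).re
  have hμ : u * ⟪x, T y⟫_ℂ + conj u * ⟪y, T x⟫_ℂ = μ * w := by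
    have : u * (⟪x, T y⟫_ℂ / w) + conj u * (⟪y, T x⟫_ℂ / w) = μ := Complex.ext rfl him
    field_simp at this
    linear_combination this
  obtain ⟨θ, hθ⟩ := Real.exists_cos_sq_add_mul_cos_mul_sin_eq μ hs₀ hs₁
  have huu : conj u * u = 1 := by rw [Complex.conj_mul', hu]; norm_num
  have hθ' : (Real.cos θ : ℂ) ^ 2 + μ * Real.cos θ * Real.sin θ = s := by exact_mod_cast hθ
  have hcs : (Real.cos θ : ℂ) ^ 2 + (Real.sin θ : ℂ) ^ 2 = 1 := by
    exact_mod_cast Real.cos_sq_add_sin_sq θ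
  refine ⟨Real.cos θ, u * Real.sin θ, ?_, ?_⟩
  · have hperp : ⟪(Real.cos θ : ℂ) • x, (u * Real.sin θ) • y⟫_ℂ = 0 := by simp [hxy]
    rw [← pow_eq_one_iff_of_nonneg (norm_nonneg _) two_ne_zero, @norm_add_sq ℂ, hperp]
    simp only [norm_smul, norm_mul, Complex.norm_real, Real.norm_eq_abs, hx, hy, hu]
    simp [Real.cos_sq_add_sin_sq]
  · simp only [map_add, map_smul, inner_add_left, inner_add_right, inner_smul_left,
      inner_smul_right, map_mul, Complex.conj_ofReal]
    linear_combination (Real.cos θ * Real.sin θ : ℂ) * hμ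
      + (Real.sin θ : ℂ) ^ 2 * ⟪y, T y⟫_ℂ * huu + w * hθ' + ⟪y, T y⟫_ℂ * hcs

theorem exists_unit_mem_span_inner_map_self_eq_average (T : E →ₗ[ℂ] E) :
    ∀ {n : ℕ} {e : Fin (n + 1) → E}, Orthonormal ℂ e →
      ∃ v ∈ span ℂ (range e), ‖v‖ = 1 ∧
        ⟪v, T v⟫_ℂ = ((n : ℂ) + 1)⁻¹ * ∑ i, ⟪e i, T (e i)⟫_ℂ
  | 0, e, he => ⟨e 0, subset_span ⟨0, rfl⟩, he.1 0, by simp⟩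
  | n + 1, e, he => by
    obtain ⟨v, hv, hv₁, hvT⟩ :=
      exists_unit_mem_span_inner_map_self_eq_average T (he.comp _ (Fin.castSucc_injective _))
    have hv_last : ⟪v, e (Fin.last _)⟫_ℂ = 0 :=
      (isOrtho_span.mpr (by
        rintro _ ⟨i, rfl⟩ _ rfl
        exact he.2 (Fin.castSucc_ne_last i))).inner_eq hv (mem_span_singleton_self _)
    have hs₀ : (0 : ℝ) ≤ (n + 1) / (n + 2) := by positivity
    have hs₁ : ((n : ℝ) + 1) / (n + 2) ≤ 1 := by rw [div_le_one (by positivity)]; linarith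
    obtain ⟨a, b, hab₁, habT⟩ :=
      exists_unit_smul_add_smul_inner_map_self_eq_convex_comb T hv₁ (he.1 _) hv_last hs₀ hs₁
    refine ⟨a • v + b • e (Fin.last _), ?_, hab₁, ?_⟩
    · exact add_mem (smul_mem _ _ (span_mono (range_comp_subset_range _ _) hv))
        (smul_mem _ _ (subset_span ⟨_, rfl⟩))
    · rw [habT, hvT, Fin.sum_univ_castSucc fun i => ⟪e i, T (e i)⟫_ℂ]
      have hn : (n : ℂ) + 2 ≠ 0 := by norm_cast
      simp only [Function.comp_apply]
      push_cast
      rw [show (n : ℂ) + 1 + 1 = n + 2 by ring]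
      field_simp
      ring

end Complex

section RCLike

variable {𝕜 E : Type*} [RCLike 𝕜] [NormedAddCommGroup E] [InnerProductSpace 𝕜 E]

noncomputable def LinearMap.compression (K : Submodule 𝕜 E) [K.HasOrthogonalProjection]
    (T : E →ₗ[𝕜] E) : K →ₗ[𝕜] K :=
  K.orthogonalProjectionOnto.toLinearMap ∘ₗ T ∘ₗ K.subtype

lemma LinearMap.inner_compression_apply (K : Submodule 𝕜 E) [K.HasOrthogonalProjection]
    (T : E →ₗ[𝕜] E) (x y : K) : ⟪x, T.compression K y⟫_𝕜 = ⟪(x : E), T y⟫_𝕜 := by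
  simp [LinearMap.compression]

lemma LinearMap.trace_eq_inner_add_trace_compression [FiniteDimensional 𝕜 E] (T : E →ₗ[𝕜] E)
    {v : E} (hv : ‖v‖ = 1) :
    trace 𝕜 E T = ⟪v, T v⟫_𝕜 + trace 𝕜 _ (T.compression (𝕜 ∙ v)ᗮ) := by
  have hsplit : T = ((innerₛₗ 𝕜 v) ∘ₗ T).smulRight v
      + (𝕜 ∙ v)ᗮ.subtype ∘ₗ (𝕜 ∙ v)ᗮ.orthogonalProjectionOnto.toLinearMap ∘ₗ T := by
    ext x
    simp [starProjection_unit_singleton 𝕜 hv]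
  conv_lhs => rw [hsplit]
  rw [map_add, trace_smulRight, trace_comp_comm']
  rfl

lemma Orthonormal.fin_cons {n : ℕ} {v : E} {u : Fin n → E} (hu : Orthonormal 𝕜 u)
    (hv : ‖v‖ = 1) (hvu : ∀ i, ⟪v, u i⟫_𝕜 = 0) :
    Orthonormal 𝕜 (Fin.cons v u : Fin (n + 1) → E) := by
  have huv (i : Fin n) : ⟪u i, v⟫_𝕜 = 0 := inner_eq_zero_symm.mp (hvu i)
  rw [orthonormal_iff_ite] at hu ⊢
  intro i j
  cases i using Fin.cases <;> cases j using Fin.cases <;>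
    simp [hu, hvu, huv, inner_self_eq_norm_sq_to_K, hv, Fin.succ_ne_zero,
      (Fin.succ_ne_zero _).symm, Fin.succ_inj]

end RCLike

theorem exists_orthonormal_inner_map_self_eq_zero_of_trace_eq_zero {E : Type*}
    [NormedAddCommGroup E] [InnerProductSpace ℂ E] [FiniteDimensional ℂ E] {n : ℕ}
    (hn : finrank ℂ E = n) (T : E →ₗ[ℂ] E) (hT : LinearMap.trace ℂ E T = 0) :
    ∃ u : Fin n → E, Orthonormal ℂ u ∧ ∀ i, ⟪u i, T (u i)⟫_ℂ = 0 := by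
  induction n generalizing E with
  | zero => exact ⟨Fin.elim0, .of_isEmpty _, fun i => i.elim0⟩
  | succ n ih =>
    let b := (stdOrthonormalBasis ℂ E).reindex (finCongr hn)
    obtain ⟨v, -, hv₁, hvT⟩ := exists_unit_mem_span_inner_map_self_eq_average T b.orthonormal
    rw [← LinearMap.trace_eq_sum_inner T b, hT, mul_zero] at hvT
    have : Fact (finrank ℂ E = n + 1) := ⟨hn⟩
    have hv : v ≠ 0 := norm_ne_zero_iff.mp (hv₁ ▸ one_ne_zero)
    have hK : LinearMap.trace ℂ _ (T.compression (ℂ ∙ v)ᗮ) = 0 := by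
      simpa [hT, hvT] using (T.trace_eq_inner_add_trace_compression hv₁).symm
    obtain ⟨u, hu, huT⟩ := ih (finrank_orthogonal_span_singleton hv) _ hK
    refine ⟨Fin.cons v ((ℂ ∙ v)ᗮ.subtype ∘ u),
      (hu.comp_linearIsometry (ℂ ∙ v)ᗮ.subtypeₗᵢ).fin_cons hv₁ fun i => ?_,
      Fin.cases hvT fun i => ?_⟩
    · exact mem_orthogonal_singleton_iff_inner_right.mp (u i).2
    · simpa [T.inner_compression_apply] using huT i

/-- For any traceless matrix `M ∈ ℂ^{d×d}` there exists an orthonormal basis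
`u_1, ..., u_d` of `ℂ^d` such that `⟨u_i| M |u_i⟩ = 0` for all `i`. -/
theorem zero_diagonalization (d : ℕ) (M : Matrix (Fin d) (Fin d) ℂ)
    (hM : M.trace = 0) :
    ∃ u : Fin d → (Fin d → ℂ),
      (∀ i j, star (u i) ⬝ᵥ u j = if i = j then 1 else 0) ∧
      (∀ i, star (u i) ⬝ᵥ M.mulVec (u i) = 0) := by
  have htrace : LinearMap.trace ℂ _ (toEuclideanLin M) = 0 :=
    (trace_toLin_eq M (PiLp.basisFun 2 ℂ (Fin d))).trans hM
  obtain ⟨u, hu, huM⟩ :=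
    exists_orthonormal_inner_map_self_eq_zero_of_trace_eq_zero finrank_euclideanSpace_fin _ htrace
  refine ⟨fun i => WithLp.ofLp (u i), fun i j => ?_, fun i => ?_⟩
  · rw [← orthonormal_iff_ite.mp hu i j, EuclideanSpace.inner_eq_star_dotProduct, dotProduct_comm]
  · rw [← huM i, EuclideanSpace.inner_eq_star_dotProduct, dotProduct_comm]
    rfl
end

section
/- Any two traceless Hermitian matrices M₁, M₂ ∈ ℂ^{d×d} can be simultaneously zero-diagonalized: there exists a unitary U ∈ ℂ^{d×d} such that all diagonal entries of U† M₁ U and of U† M₂ U are zero. -/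
/-!
Since `M₁` and `M₂` are Hermitian, the diagonal entries of `U† M₁ U` and `U† M₂ U` are the real
and imaginary parts of those of `U† (M₁ + i M₂) U`, so it suffices to conjugate a single traceless
matrix `A` to zero diagonal. By the Toeplitz–Hausdorff theorem the numerical range
`{⟪x, A x⟫ : ‖x‖ = 1}` is convex; it contains the diagonal entries of `A`, hence their mean
`tr A / d = 0`. A unit vector `v` with `⟪v, A v⟫ = 0` is taken as the first basis vector; the
compression of `A` to `v^⊥` is again traceless, and induction on the dimension finishes.
-/

open Module Set Complex
open scoped InnerProductSpace ComplexConjugate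

namespace LinearMap

section NumericalRange

variable {E : Type*} [NormedAddCommGroup E] [InnerProductSpace ℂ E]

def numericalRange (T : E →ₗ[ℂ] E) : Set ℂ := {z | ∃ x : E, ‖x‖ = 1 ∧ ⟪x, T x⟫_ℂ = z}

theorem ofReal_mem_numericalRange_of_mem_Icc {T : E →ₗ[ℂ] E} {x y : E} (hx : ‖x‖ = 1)
    (hy : ‖y‖ = 1) (hTx : ⟪x, T x⟫_ℂ = 1) (hTy : ⟪y, T y⟫_ℂ = 0) {s : ℝ} (hs : s ∈ Icc 0 1) :
    (s : ℂ) ∈ T.numericalRange := by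
  set w := ⟪x, T y⟫_ℂ - conj ⟪y, T x⟫_ℂ
  set ω := exp (↑(-arg w) * I)
  have hω : ‖ω‖ = 1 := norm_exp_ofReal_mul_I _
  have hωw : ω * w = ‖w‖ := by
    conv_lhs => rw [← norm_mul_exp_arg_mul_I w]
    rw [mul_left_comm, ← Complex.exp_add]
    push_cast
    simp
  set y' := ω • y
  have hy' : ‖y'‖ = 1 := by rw [norm_smul, hω, hy, one_mul]
  have hTy' : ⟪y', T y'⟫_ℂ = 0 := by simp [y', hTy]
  -- The phase `ω` makes the cross term `c` real, hence the form is real along the segment `z`.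
  set c := ⟪y', T x⟫_ℂ + ⟪x, T y'⟫_ℂ
  have hc : conj c = c := by
    have h := congrArg conj hωw
    simp only [w, map_sub, map_mul, conj_conj, conj_ofReal] at h hωw
    simp only [c, y', map_smul, inner_smul_left, inner_smul_right, map_add, map_mul, conj_conj]
    linear_combination h - hωw
  set z : ℝ → E := fun t ↦ (1 - t : ℂ) • y' + (t : ℂ) • x
  have hTz (t : ℝ) : ⟪z t, T (z t)⟫_ℂ = ((t ^ 2 + t * (1 - t) * c.re : ℝ) : ℂ) := by
    push_cast
    rw [conj_eq_iff_re.mp hc]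
    simp only [z, map_add, map_smul, inner_add_left, inner_add_right, inner_smul_left,
      inner_smul_right, hTx, hTy', c, map_sub, map_one, conj_ofReal]
    ring
  have hz (t : ℝ) : z t ≠ 0 := by
    intro h0
    have hxy : (t : ℂ) • x = -((1 - t : ℂ) • y') := eq_neg_of_add_eq_zero_right h0
    have ht0 : (t : ℂ) ^ 2 = 0 := calc
      (t : ℂ) ^ 2 = ⟪(t : ℂ) • x, T ((t : ℂ) • x)⟫_ℂ := by simp [hTx, sq]
      _ = 0 := by simp [hxy, inner_smul_left, inner_smul_right, hTy']
    have ht0 : t = 0 := by exact_mod_cast pow_eq_zero_iff two_ne_zero |>.mp ht0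
    simp [z, ht0] at h0
    simp [h0] at hy'
  set f : ℝ → ℝ := fun t ↦ (t ^ 2 + t * (1 - t) * c.re) / ‖z t‖ ^ 2
  have hf : ContinuousOn f (Icc 0 1) :=
    ContinuousOn.div (by fun_prop) (by fun_prop) fun t _ ↦ by positivity [hz t]
  obtain ⟨t, -, hft⟩ : s ∈ f '' Icc 0 1 :=
    intermediate_value_Icc zero_le_one hf (by simpa [f, z, hx, hy'] using hs)
  refine ⟨(‖z t‖⁻¹ : ℂ) • z t, ?_, ?_⟩
  · rw [norm_smul, norm_inv, norm_real, norm_norm,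
      inv_mul_cancel₀ (norm_ne_zero_iff.mpr (hz t))]
  · rw [← hft, inner_smul_left, map_smul, inner_smul_right, hTz]
    simp only [map_inv₀, conj_ofReal, f]
    push_cast
    ring

theorem convex_numericalRange (T : E →ₗ[ℂ] E) : Convex ℝ T.numericalRange := by
  rintro _ ⟨x, hx, rfl⟩ _ ⟨y, hy, rfl⟩ a b ha hb hab
  obtain rfl : b = 1 - a := by linarith
  by_cases hxy : ⟪x, T x⟫_ℂ = ⟪y, T y⟫_ℂ
  · exact ⟨x, hx, by rw [← hxy, ← add_smul, hab, one_smul]⟩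
  set c := ⟪x, T x⟫_ℂ - ⟪y, T y⟫_ℂ
  have hc : c ≠ 0 := sub_ne_zero.mpr hxy
  set S := c⁻¹ • (T - ⟪y, T y⟫_ℂ • LinearMap.id)
  have hS {z : E} (hz : ‖z‖ = 1) : ⟪z, T z⟫_ℂ = c * ⟪z, S z⟫_ℂ + ⟪y, T y⟫_ℂ := by
    simp [S, inner_self_eq_norm_sq_to_K, hz, hc]
  obtain ⟨z, hz, hSz⟩ := ofReal_mem_numericalRange_of_mem_Icc (T := S) hx hy
    (by simpa [S, inner_self_eq_norm_sq_to_K, hx] using inv_mul_cancel₀ hc)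
    (by simp [S, inner_self_eq_norm_sq_to_K, hy]) ⟨ha, by linarith⟩
  refine ⟨z, hz, ?_⟩
  rw [hS hz, hSz, real_smul, real_smul]
  push_cast
  ring

theorem trace_div_finrank_mem_numericalRange [FiniteDimensional ℂ E] (T : E →ₗ[ℂ] E)
    (hE : finrank ℂ E ≠ 0) : trace ℂ E T / finrank ℂ E ∈ T.numericalRange := by
  set b := stdOrthonormalBasis ℂ E
  have hmem := (convex_numericalRange T).sum_mem (t := Finset.univ)
    (w := fun _ ↦ (finrank ℂ E : ℝ)⁻¹) (z := fun i ↦ ⟪b i, T (b i)⟫_ℂ) (by intros; positivity)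
    (by simp [hE]) fun i _ ↦ ⟨b i, b.norm_eq_one i, rfl⟩
  simpa [trace_eq_sum_inner T b, div_eq_inv_mul, Finset.mul_sum, real_smul] using hmem

end NumericalRange

end LinearMap

section Compression

variable {𝕜 E : Type*} [RCLike 𝕜] [NormedAddCommGroup E] [InnerProductSpace 𝕜 E]

theorem Orthonormal.fin_cons_orthogonal_span_singleton {n : ℕ} {v : E} (hv : ‖v‖ = 1)
    {w : Fin n → (𝕜 ∙ v)ᗮ} (hw : Orthonormal 𝕜 w) :
    Orthonormal 𝕜 (Fin.cons v (fun i ↦ (w i : E)) : Fin (n + 1) → E) := by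
  have hw' := hw.comp_linearIsometry (𝕜 ∙ v)ᗮ.subtypeₗᵢ
  rw [orthonormal_iff_ite] at hw' ⊢
  intro i j
  cases i using Fin.cases <;> cases j using Fin.cases <;>
    simp [inner_self_eq_norm_sq_to_K, hv, Fin.succ_ne_zero, (Fin.succ_ne_zero _).symm,
      Submodule.mem_orthogonal_singleton_iff_inner_right.mp (w _).2,
      Submodule.mem_orthogonal_singleton_iff_inner_left.mp (w _).2, ← hw']

theorem OrthonormalBasis.exists_fin_cons_orthogonal_span_singleton [FiniteDimensional 𝕜 E]
    {n : ℕ} {v : E} (hv : ‖v‖ = 1) (c : OrthonormalBasis (Fin n) 𝕜 (𝕜 ∙ v)ᗮ) :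
    ∃ b : OrthonormalBasis (Fin (n + 1)) 𝕜 E, ⇑b = Fin.cons v (fun i ↦ (c i : E)) := by
  have hon := Orthonormal.fin_cons_orthogonal_span_singleton hv c.orthonormal
  have hcard : Fintype.card (Fin (n + 1)) = finrank 𝕜 E := by
    rw [← (𝕜 ∙ v).finrank_add_finrank_orthogonal,
      finrank_span_singleton (by simp [← norm_ne_zero_iff, hv]), finrank_eq_card_basis c.toBasis]
    simp [add_comm]
  let b := basisOfOrthonormalOfCardEqFinrank hon hcard
  exact ⟨b.toOrthonormalBasis (by simpa [b] using hon), by simp [b]⟩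

namespace LinearMap

noncomputable def compression_s1 (T : E →ₗ[𝕜] E) (K : Submodule 𝕜 E) [K.HasOrthogonalProjection] :
    K →ₗ[𝕜] K :=
  K.orthogonalProjectionOnto.toLinearMap ∘ₗ T ∘ₗ K.subtype

theorem inner_compression_apply_s1 (T : E →ₗ[𝕜] E) (K : Submodule 𝕜 E) [K.HasOrthogonalProjection]
    (u w : K) : ⟪u, T.compression_s1 K w⟫_𝕜 = ⟪(u : E), T w⟫_𝕜 :=
  Submodule.inner_orthogonalProjectionOnto_eq_of_mem_left u (T w)

theorem trace_compression_orthogonal_span_singleton [FiniteDimensional 𝕜 E] (T : E →ₗ[𝕜] E)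
    {v : E} (hv : ‖v‖ = 1) :
    trace 𝕜 _ (T.compression_s1 (𝕜 ∙ v)ᗮ) = trace 𝕜 E T - ⟪v, T v⟫_𝕜 := by
  set c := stdOrthonormalBasis 𝕜 (𝕜 ∙ v)ᗮ
  obtain ⟨b, hb⟩ := OrthonormalBasis.exists_fin_cons_orthogonal_span_singleton hv c
  rw [trace_eq_sum_inner T b, trace_eq_sum_inner _ c, Fin.sum_univ_succ]
  simp only [inner_compression_apply_s1, hb, Fin.cons_zero, Fin.cons_succ]
  ring

end LinearMap

end Compression

theorem LinearMap.exists_orthonormalBasis_inner_apply_self_eq_zero {E : Type*}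
    [NormedAddCommGroup E] [InnerProductSpace ℂ E] [FiniteDimensional ℂ E] {n : ℕ}
    (hn : finrank ℂ E = n) (T : E →ₗ[ℂ] E) (hT : trace ℂ E T = 0) :
    ∃ b : OrthonormalBasis (Fin n) ℂ E, ∀ i, ⟪b i, T (b i)⟫_ℂ = 0 := by
  induction n generalizing E with
  | zero => exact ⟨(stdOrthonormalBasis ℂ E).reindex (finCongr hn), fun i ↦ i.elim0⟩
  | succ n ih =>
    obtain ⟨v, hv, hTv⟩ : (0 : ℂ) ∈ T.numericalRange := by
      simpa [hT] using trace_div_finrank_mem_numericalRange T (by omega)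
    have : Fact (finrank ℂ E = n + 1) := ⟨hn⟩
    obtain ⟨c, hc⟩ := ih
      (Submodule.finrank_orthogonal_span_singleton (by simp [← norm_ne_zero_iff, hv]))
      (T.compression_s1 (ℂ ∙ v)ᗮ)
      (by rw [trace_compression_orthogonal_span_singleton T hv, hT, hTv, sub_zero])
    obtain ⟨b, hb⟩ := OrthonormalBasis.exists_fin_cons_orthogonal_span_singleton hv c
    refine ⟨b, Fin.cases ?_ fun i ↦ ?_⟩
    · simpa [hb] using hTv
    · simpa [hb] using (T.inner_compression_apply_s1 _ (c i) (c i)).symm.trans (hc i)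

namespace Matrix

theorem inner_toEuclideanLin_eq_conjTranspose_mul_mul_apply {𝕜 ι ι' : Type*} [RCLike 𝕜]
    [Fintype ι] [DecidableEq ι] (A : Matrix ι ι 𝕜) (b : ι' → EuclideanSpace 𝕜 ι) (i j : ι') :
    ⟪b i, toEuclideanLin A (b j)⟫_𝕜 =
      (((EuclideanSpace.basisFun ι 𝕜).toBasis.toMatrix b)ᴴ * A *
        (EuclideanSpace.basisFun ι 𝕜).toBasis.toMatrix b) i j := by
  simp only [EuclideanSpace.inner_eq_star_dotProduct, dotProduct, mul_apply, conjTranspose_apply,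
    Basis.toMatrix_apply, OrthonormalBasis.coe_toBasis_repr_apply, EuclideanSpace.basisFun_repr,
    ofLp_toLpLin, toLin'_apply, mulVec, Pi.star_apply, Finset.sum_mul]
  rw [Finset.sum_comm]
  exact Finset.sum_congr rfl fun _ _ ↦ Finset.sum_congr rfl fun _ _ ↦ by ring

theorem exists_mem_unitaryGroup_diag_conjTranspose_mul_mul_eq_zero {ι : Type*} [Fintype ι]
    [DecidableEq ι] (A : Matrix ι ι ℂ) (hA : A.trace = 0) :
    ∃ U ∈ unitaryGroup ι ℂ, ∀ i, (Uᴴ * A * U) i i = 0 := by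
  have htr : LinearMap.trace ℂ _ (toEuclideanLin A) = 0 := by
    rw [toEuclideanLin, toLpLin_eq_toLin, trace_toLin_eq, hA]
  obtain ⟨b, hb⟩ := LinearMap.exists_orthonormalBasis_inner_apply_self_eq_zero
    (finrank_euclideanSpace (𝕜 := ℂ) (ι := ι)) _ htr
  set b' := b.reindex (Fintype.equivFin ι).symm
  refine ⟨(EuclideanSpace.basisFun ι ℂ).toBasis.toMatrix b',
    (EuclideanSpace.basisFun ι ℂ).toMatrix_orthonormalBasis_mem_unitary b', fun i ↦ ?_⟩
  rw [← inner_toEuclideanLin_eq_conjTranspose_mul_mul_apply]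
  simpa [b'] using hb (Fintype.equivFin ι i)

end Matrix

open Matrix

/-- Any two traceless Hermitian matrices can be simultaneously zero-diagonalized
by a unitary. -/
theorem simultaneous_zero_diagonalization (d : ℕ)
    (M₁ M₂ : Matrix (Fin d) (Fin d) ℂ)
    (h₁ : M₁.IsHermitian) (h₂ : M₂.IsHermitian)
    (t₁ : M₁.trace = 0) (t₂ : M₂.trace = 0) :
    ∃ U : Matrix (Fin d) (Fin d) ℂ,
      U ∈ Matrix.unitaryGroup (Fin d) ℂ ∧
      (∀ i, (Uᴴ * M₁ * U) i i = 0) ∧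
      (∀ i, (Uᴴ * M₂ * U) i i = 0) := by
  obtain ⟨U, hU, hdiag⟩ := exists_mem_unitaryGroup_diag_conjTranspose_mul_mul_eq_zero
    (M₁ + I • M₂) (by rw [trace_add, trace_smul, t₁, t₂, smul_zero, add_zero])
  have him {M : Matrix (Fin d) (Fin d) ℂ} (hM : M.IsHermitian) (i : Fin d) :
      ((Uᴴ * M * U) i i).im = 0 :=
    conj_eq_iff_im.mp ((isHermitian_conjTranspose_mul_mul U hM).apply i i)
  have hsum (i : Fin d) : (Uᴴ * M₁ * U) i i + I * (Uᴴ * M₂ * U) i i = 0 := by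
    simpa [Matrix.mul_add, Matrix.add_mul] using hdiag i
  refine ⟨U, hU, fun i ↦ Complex.ext ?_ (him h₁ i), fun i ↦ Complex.ext ?_ (him h₂ i)⟩
  · simpa [him h₂ i] using congrArg re (hsum i)
  · simpa [him h₁ i] using congrArg im (hsum i)
end

section
/- Let M₁, M₂ be 2×2 traceless Hermitian matrices, written as M_k = [[a_k, b_k e^{iφ_k}], [b_k e^{-iφ_k}, -a_k]] with a_k, b_k, φ_k real and a_k ≠ 0. Then there exist real numbers α, β such that the unit vector v = (cos β, sin β e^{-iα}) satisfies ⟨v|M₁|v⟩ = ⟨v|M₂|v⟩ = 0; equivalently, there exist α, β with cot(2β) = -(b_k/a_k)·cos(α - φ_k) for k = 1, 2. -/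
/-!
In the state `v = (cos β, sin β e^{-iα})` the expectation of `M_k` is
`a_k cos 2β + b_k sin 2β cos (α - φ_k)`, the Euclidean pairing of `(a_k, b_k cos φ_k, b_k sin φ_k)`
with the Bloch vector `(cos 2β, sin 2β cos α, sin 2β sin α)`. Two linear forms on `ℝ³` have a common
nonzero zero, and spherical coordinates write every vector of `ℝ³` as a multiple of a Bloch vector.
-/

open Matrix

theorem Matrix.exists_ne_zero_mulVec_eq_zero_of_card_lt {K m n : Type*} [Field K] [Fintype m]
    [Fintype n] (A : Matrix m n K) (h : Fintype.card m < Fintype.card n) :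
    ∃ v ≠ 0, A *ᵥ v = 0 := by
  have hker : LinearMap.ker A.mulVecLin ≠ ⊥ :=
    LinearMap.ker_ne_bot_of_finrank_lt (by simpa only [Module.finrank_fintype_fun_eq_card])
  obtain ⟨v, hv, hv0⟩ := (Submodule.ne_bot_iff _).mp hker
  exact ⟨v, hv0, hv⟩

theorem Real.exists_spherical_coords (x y z : ℝ) :
    ∃ r θ α : ℝ, x = r * cos θ ∧ y = r * sin θ * cos α ∧ z = r * sin θ * sin α := by
  set s := ‖(y + z * Complex.I : ℂ)‖
  refine ⟨‖(x + s * Complex.I : ℂ)‖, Complex.arg (x + s * Complex.I),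
    Complex.arg (y + z * Complex.I), ?_, ?_, ?_⟩
  · simp
  · rw [Complex.norm_mul_sin_arg]; simp [s]
  · rw [Complex.norm_mul_sin_arg]; simp [s]

theorem star_dotProduct_mulVec_tracelessHermitian (a b φ α β : ℝ) :
    star ![(Real.cos β : ℂ), (Real.sin β : ℂ) * Complex.exp (-Complex.I * (α : ℂ))] ⬝ᵥ
      !![(a : ℂ), (b : ℂ) * Complex.exp (Complex.I * (φ : ℂ));
         (b : ℂ) * Complex.exp (-Complex.I * (φ : ℂ)), -(a : ℂ)] *ᵥ
        ![(Real.cos β : ℂ), (Real.sin β : ℂ) * Complex.exp (-Complex.I * (α : ℂ))] =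
      ((a * Real.cos (2 * β) + b * Real.sin (2 * β) * Real.cos (α - φ) : ℝ) : ℂ) := by
  have hexp_neg (x : ℝ) : Complex.exp (-Complex.I * x) = (Complex.exp (Complex.I * x))⁻¹ := by
    rw [neg_mul, Complex.exp_neg]
  have hcos_sub : Complex.cos (α - φ) =
      (Complex.exp (Complex.I * α) * (Complex.exp (Complex.I * φ))⁻¹ +
        Complex.exp (Complex.I * φ) * (Complex.exp (Complex.I * α))⁻¹) / 2 := by
    rw [Complex.cos, ← Complex.exp_neg, ← Complex.exp_neg, ← Complex.exp_add, ← Complex.exp_add]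
    ring_nf
  simp only [dotProduct, mulVec, Fin.sum_univ_two, Pi.star_apply, cons_val_zero, cons_val_one,
    of_apply, Complex.star_def, map_mul, Complex.conj_ofReal, ← Complex.exp_conj, map_neg,
    Complex.conj_I]
  push_cast
  rw [Complex.cos_two_mul', Complex.sin_two_mul, hcos_sub, neg_neg, hexp_neg, hexp_neg]
  have hα := Complex.exp_ne_zero (Complex.I * α)
  have hφ := Complex.exp_ne_zero (Complex.I * φ)
  field_simp
  ring

theorem two_by_two_zero_diag_general (a b φ : Fin 2 → ℝ)
    (M : Fin 2 → Matrix (Fin 2) (Fin 2) ℂ)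
    (hM : ∀ k, M k =
      !![(a k : ℂ), (b k : ℂ) * Complex.exp (Complex.I * (φ k : ℂ));
         (b k : ℂ) * Complex.exp (-Complex.I * (φ k : ℂ)), -(a k : ℂ)]) :
    ∃ α β : ℝ, ∀ k,
      star ![(Real.cos β : ℂ), (Real.sin β : ℂ) * Complex.exp (-Complex.I * (α : ℂ))] ⬝ᵥ
        (M k).mulVec
          ![(Real.cos β : ℂ), (Real.sin β : ℂ) * Complex.exp (-Complex.I * (α : ℂ))] = 0 := by
  obtain ⟨w, hw0, hw⟩ := (of fun k => ![a k, b k * Real.cos (φ k), b k * Real.sin (φ k)] :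
    Matrix (Fin 2) (Fin 3) ℝ).exists_ne_zero_mulVec_eq_zero_of_card_lt (by simp)
  obtain ⟨r, θ, α, hx, hy, hz⟩ := Real.exists_spherical_coords (w 0) (w 1) (w 2)
  have hr : r ≠ 0 := by
    rintro rfl
    exact hw0 (funext fun i => by fin_cases i <;> simp [hx, hy, hz])
  refine ⟨α, θ / 2, fun k => ?_⟩
  rw [hM, star_dotProduct_mulVec_tracelessHermitian, mul_div_cancel₀ θ two_ne_zero,
    Complex.ofReal_eq_zero, Real.cos_sub]
  have hk := congrFun hw k
  simp only [mulVec, dotProduct, of_apply, Fin.sum_univ_three, cons_val_zero, cons_val_one,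
    cons_val_two, vecHead, vecTail, Function.comp_apply, Fin.succ_zero_eq_one, cons_val_fin_one,
    Pi.zero_apply, hx, hy, hz] at hk
  apply mul_left_cancel₀ hr
  linear_combination hk

/-- For two 2×2 traceless Hermitian matrices `M_k = [[a_k, b_k e^{iφ_k}],
[b_k e^{-iφ_k}, -a_k]]` with `a_k ≠ 0`, there exist reals `α, β` such that the
unit vector `v = (cos β, sin β e^{-iα})` satisfies `⟨v|M₁|v⟩ = ⟨v|M₂|v⟩ = 0`. -/
theorem two_by_two_zero_diag (a b φ : Fin 2 → ℝ) (ha : ∀ k, a k ≠ 0)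
    (M : Fin 2 → Matrix (Fin 2) (Fin 2) ℂ)
    (hM : ∀ k, M k =
      !![(a k : ℂ), (b k : ℂ) * Complex.exp (Complex.I * (φ k : ℂ));
         (b k : ℂ) * Complex.exp (-Complex.I * (φ k : ℂ)), -(a k : ℂ)]) :
    ∃ α β : ℝ, ∀ k,
      star ![(Real.cos β : ℂ), (Real.sin β : ℂ) * Complex.exp (-Complex.I * (α : ℂ))] ⬝ᵥ
        (M k).mulVec
          ![(Real.cos β : ℂ), (Real.sin β : ℂ) * Complex.exp (-Complex.I * (α : ℂ))] = 0 :=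
  two_by_two_zero_diag_general a b φ M hM
end

section
/- Let M be a traceless anti-Hermitian matrix in ℂ^{d×d} (i.e., M† = -M, Tr M = 0). Then iM is a traceless Hermitian matrix, and consequently there exists an orthonormal basis {u_i} of ℂ^d with ⟨u_i|M|u_i⟩ = 0 for all i. -/
/-!
Diagonalize the Hermitian matrix `iM` by a unitary `U`, with real eigenvalues `λ_a`, and then
rotate the eigenbasis by the unitary discrete Fourier matrix `F a k = ζ ^ (k a) / √d`,
`ζ = exp (2πi / d)`. All entries of `F` have modulus `1 / √d`, so every column `u_k` of `U F`
has equal weight on all eigenvectors and `⟨u_k| iM |u_k⟩ = (∑ λ_a) / d = tr (iM) / d = 0`.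
-/

open Finset
open scoped Real

theorem Complex.sum_range_star_pow_mul_pow {n : ℕ} {x y : ℂ} (hx : x ^ n = 1) (hy : y ^ n = 1) :
    ∑ a ∈ range n, star (x ^ a) * y ^ a = if x = y then (n : ℂ) else 0 := by
  rcases eq_or_ne n 0 with rfl | hn
  · simp
  have hx0 : x ≠ 0 := by rintro rfl; simp [hn] at hx
  have hstar : star x = x⁻¹ :=
    (Complex.inv_eq_conj (Complex.norm_eq_one_of_pow_eq_one hx hn)).symm
  simp_rw [star_pow, hstar, ← mul_pow]
  split_ifs with hxy
  · simp [← hxy, hx0]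
  · have hw : x⁻¹ * y ≠ 1 := fun h => hxy ((inv_mul_eq_one₀ hx0).mp h)
    rw [geom_sum_eq hw, mul_pow, inv_pow, hx, hy]
    simp

noncomputable def Matrix.fourierMatrix (d : ℕ) : Matrix (Fin d) (Fin d) ℂ :=
  Matrix.of fun a k => (Complex.exp (2 * π * Complex.I / d) ^ (k : ℕ)) ^ (a : ℕ) / (√d : ℝ)

namespace Matrix

section Columns

variable {m n α : Type*} [Fintype m] [CommSemiring α] [StarRing α]

theorem star_col_dotProduct_col (W : Matrix m n α) (i j : n) :
    star (W.col i) ⬝ᵥ W.col j = (Wᴴ * W) i j := by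
  rw [mul_apply']; rfl

theorem star_col_dotProduct_mulVec_col (W : Matrix m n α) (A : Matrix m m α) (i j : n) :
    star (W.col i) ⬝ᵥ A *ᵥ W.col j = (Wᴴ * A * W) i j := by
  rw [Matrix.mul_assoc, mul_apply']; rfl

end Columns

theorem star_fourierMatrix_apply_mul_self (d : ℕ) (a k : Fin d) :
    star (fourierMatrix d a k) * fourierMatrix d a k = (d : ℂ)⁻¹ := by
  have hζ := Complex.isPrimitiveRoot_exp d a.pos.ne'
  rw [fourierMatrix, of_apply, Complex.star_def, Complex.conj_mul', norm_div, norm_pow, norm_pow,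
    Complex.norm_eq_one_of_pow_eq_one hζ.pow_eq_one a.pos.ne', Complex.norm_real,
    Real.norm_of_nonneg (Real.sqrt_nonneg _), one_pow, one_pow, one_div,
    ← Complex.ofReal_pow, inv_pow, Real.sq_sqrt (Nat.cast_nonneg d), Complex.ofReal_inv,
    Complex.ofReal_natCast]

theorem conjTranspose_fourierMatrix_mul_self (d : ℕ) :
    (fourierMatrix d)ᴴ * fourierMatrix d = 1 := by
  ext i j
  have hζ := Complex.isPrimitiveRoot_exp d i.pos.ne'
  set ζ := Complex.exp (2 * π * Complex.I / d)
  have hroot (k : Fin d) : (ζ ^ (k : ℕ)) ^ d = 1 := by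
    rw [← pow_mul, mul_comm, pow_mul, hζ.pow_eq_one, one_pow]
  have hinj : ζ ^ (i : ℕ) = ζ ^ (j : ℕ) ↔ i = j :=
    ⟨fun h => Fin.ext (hζ.pow_inj i.isLt j.isLt h), fun h => h ▸ rfl⟩
  have hs : star ((√d : ℝ) : ℂ) * (√d : ℝ) = d := by
    rw [Complex.star_def, Complex.conj_ofReal, ← Complex.ofReal_mul,
      Real.mul_self_sqrt (Nat.cast_nonneg d), Complex.ofReal_natCast]
  calc ((fourierMatrix d)ᴴ * fourierMatrix d) i j
      = (∑ a ∈ range d, star ((ζ ^ (i : ℕ)) ^ a) * (ζ ^ (j : ℕ)) ^ a) / d := by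
        rw [mul_apply, ← Fin.sum_univ_eq_sum_range, Finset.sum_div]
        refine Finset.sum_congr rfl fun a _ => ?_
        rw [conjTranspose_apply, fourierMatrix, of_apply, of_apply, star_div₀, div_mul_div_comm,
          hs]
    _ = (1 : Matrix (Fin d) (Fin d) ℂ) i j := by
        rw [Complex.sum_range_star_pow_mul_pow (hroot i) (hroot j), one_apply]
        simp only [hinj]
        split_ifs
        · exact div_self (Nat.cast_ne_zero.mpr i.pos.ne')
        · exact zero_div _

theorem fourierMatrix_mem_unitaryGroup (d : ℕ) : fourierMatrix d ∈ unitaryGroup (Fin d) ℂ :=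
  mem_unitaryGroup_iff'.mpr (conjTranspose_fourierMatrix_mul_self d)

theorem conjTranspose_fourierMatrix_mul_diagonal_mul_apply_self {d : ℕ}
    (c : Fin d → ℂ) (k : Fin d) :
    ((fourierMatrix d)ᴴ * diagonal c * fourierMatrix d) k k = (∑ a, c a) / d := by
  rw [mul_apply, Finset.sum_div]
  refine Finset.sum_congr rfl fun a _ => ?_
  rw [mul_diagonal, conjTranspose_apply, mul_right_comm, star_fourierMatrix_apply_mul_self,
    div_eq_inv_mul]

theorem IsHermitian.exists_unitary_diag_eq_trace_div {d : ℕ} {A : Matrix (Fin d) (Fin d) ℂ}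
    (hA : A.IsHermitian) :
    ∃ W ∈ unitaryGroup (Fin d) ℂ, ∀ k, (Wᴴ * A * W) k k = A.trace / d := by
  set U : Matrix (Fin d) (Fin d) ℂ := (hA.eigenvectorUnitary : Matrix (Fin d) (Fin d) ℂ)
  have hdiag : Uᴴ * A * U = diagonal (RCLike.ofReal ∘ hA.eigenvalues) := by
    rw [← star_eq_conjTranspose]
    simpa [Unitary.conjStarAlgAut_star_apply] using hA.conjStarAlgAut_star_eigenvectorUnitary
  refine ⟨U * fourierMatrix d, Submonoid.mul_mem _ hA.eigenvectorUnitary.2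
    (fourierMatrix_mem_unitaryGroup d), fun k => ?_⟩
  calc ((U * fourierMatrix d)ᴴ * A * (U * fourierMatrix d)) k k
      = ((fourierMatrix d)ᴴ * (Uᴴ * A * U) * fourierMatrix d) k k := by
        simp only [conjTranspose_mul, Matrix.mul_assoc]
    _ = A.trace / d := by
        rw [hdiag, conjTranspose_fourierMatrix_mul_diagonal_mul_apply_self,
          hA.trace_eq_sum_eigenvalues]
        rfl

end Matrix

open Matrix

/-- For a traceless anti-Hermitian `M`, the matrix `iM` is traceless Hermitian,
and consequently there is an orthonormal basis `{u_i}` with `⟨u_i|M|u_i⟩ = 0`. -/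
theorem antiHermitian_zero_diag (d : ℕ) (M : Matrix (Fin d) (Fin d) ℂ)
    (hM : Mᴴ = -M) (hT : M.trace = 0) :
    (Complex.I • M).IsHermitian ∧ (Complex.I • M).trace = 0 ∧
    ∃ u : Fin d → (Fin d → ℂ),
      (∀ i j, star (u i) ⬝ᵥ u j = if i = j then 1 else 0) ∧
      (∀ i, star (u i) ⬝ᵥ M.mulVec (u i) = 0) := by
  have hH : (Complex.I • M).IsHermitian := by
    rw [IsHermitian, conjTranspose_smul, hM, Complex.star_def, Complex.conj_I, smul_neg, neg_smul,
      neg_neg]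
  have hT' : (Complex.I • M).trace = 0 := by rw [trace_smul, hT, smul_zero]
  obtain ⟨W, hW, hdiag⟩ := hH.exists_unitary_diag_eq_trace_div
  refine ⟨hH, hT', W.col, fun i j => ?_, fun k => ?_⟩
  · rw [star_col_dotProduct_col, ← star_eq_conjTranspose, mem_unitaryGroup_iff'.mp hW, one_apply]
  · have hk := hdiag k
    rw [hT', zero_div, Matrix.mul_smul, Matrix.smul_mul, Matrix.smul_apply, smul_eq_mul,
      mul_eq_zero] at hk
    rw [star_col_dotProduct_mulVec_col]
    exact hk.resolve_left Complex.I_ne_zero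
end

section
/- Let {P_x(θ)} be a finite family of differentiable probability distributions (P_x(θ) ≥ 0, Σ_x P_x(θ) = 1) arising from a quantum measurement: P_x(θ) = Tr(ρ_θ E_x) where ρ_θ is a density matrix, {E_x} are positive semidefinite with Σ_x E_x = I, and L is a Hermitian matrix with ∂_θ ρ_θ = (L ρ_θ + ρ_θ L)/2. Then the classical Fisher information F = Σ_{x: P_x(θ)≠0} (∂_θ P_x(θ))² / P_x(θ) satisfies F ≤ Tr(ρ_θ L²). -/
/-!
Factoring `ρ = Aᴴ A` and `E = Bᴴ B`, the form `(M, N) ↦ Tr(ρ Mᴴ E N)` becomes the Frobenius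
inner product of `B M Aᴴ` and `B N Aᴴ`, so it obeys Cauchy–Schwarz. By the SLD equation
`∂P_x = Re Tr(ρ E_x L)`, and Cauchy–Schwarz with `M = 1`, `N = L` gives
`(∂P_x)² ≤ P_x · Re Tr(ρ L E_x L)`. Summing over `x` and using `Σ_x E_x = I` yields `Tr(ρ L²)`.
-/

open Matrix ComplexOrder

namespace Matrix

open RCLike

variable {𝕜 : Type*} [RCLike 𝕜] {m n : Type*} [Fintype m] [Fintype n]

lemma trace_conjTranspose_mul_eq_inner (X Y : Matrix m n 𝕜) :
    (Xᴴ * Y).trace =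
      inner 𝕜 (WithLp.toLp 2 X.vec : EuclideanSpace 𝕜 (n × m)) (WithLp.toLp 2 Y.vec) := by
  rw [EuclideanSpace.inner_toLp_toLp, dotProduct_comm, star_vec_dotProduct_vec]

lemma re_trace_conjTranspose_mul_sq_le (X Y : Matrix m n 𝕜) :
    re (Xᴴ * Y).trace ^ 2 ≤ re (Xᴴ * X).trace * re (Yᴴ * Y).trace := by
  simp only [trace_conjTranspose_mul_eq_inner, ← norm_sq_eq_re_inner (𝕜 := 𝕜), ← mul_pow]
  exact sq_le_sq' (abs_le.mp ((abs_re_le_norm _).trans (norm_inner_le_norm _ _))).1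
    ((re_le_norm _).trans (norm_inner_le_norm _ _))

open scoped MatrixOrder

lemma PosSemidef.re_trace_mul_nonneg {A B : Matrix n n 𝕜} (hA : A.PosSemidef)
    (hB : B.PosSemidef) : 0 ≤ re (A * B).trace := by
  classical
  obtain ⟨C, rfl⟩ := CStarAlgebra.nonneg_iff_eq_star_mul_self.mp hA.nonneg
  rw [star_eq_conjTranspose, Matrix.mul_assoc, trace_mul_comm]
  exact (RCLike.nonneg_iff.mp (hB.mul_mul_conjTranspose_same C).trace_nonneg).1

lemma PosSemidef.re_trace_mul_sq_le {ρ E : Matrix n n 𝕜} (hρ : ρ.PosSemidef)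
    (hE : E.PosSemidef) (M N : Matrix n n 𝕜) :
    re (ρ * (Mᴴ * E * N)).trace ^ 2 ≤
      re (ρ * (Mᴴ * E * M)).trace * re (ρ * (Nᴴ * E * N)).trace := by
  classical
  obtain ⟨A, rfl⟩ := CStarAlgebra.nonneg_iff_eq_star_mul_self.mp hρ.nonneg
  obtain ⟨B, rfl⟩ := CStarAlgebra.nonneg_iff_eq_star_mul_self.mp hE.nonneg
  have hfrobenius (P Q : Matrix n n 𝕜) : (star A * A * (Pᴴ * (star B * B) * Q)).trace =
      ((B * P * Aᴴ)ᴴ * (B * Q * Aᴴ)).trace := by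
    rw [Matrix.mul_assoc, trace_mul_comm]
    simp only [star_eq_conjTranspose, conjTranspose_mul, conjTranspose_conjTranspose,
      Matrix.mul_assoc]
  simp only [hfrobenius]
  exact re_trace_conjTranspose_mul_sq_le _ _

lemma re_trace_half_smul_anticommutator_mul {ρ E L : Matrix n n 𝕜} (hρ : ρ.IsHermitian)
    (hE : E.IsHermitian) (hL : L.IsHermitian) :
    re (((1 / 2 : 𝕜) • (L * ρ + ρ * L)) * E).trace = re (ρ * (E * L)).trace := by
  have hLρE : (L * ρ * E).trace = (ρ * (E * L)).trace := by
    rw [trace_mul_comm, ← Matrix.mul_assoc, trace_mul_comm]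
  have hρLE : (ρ * L * E).trace = star (ρ * (E * L)).trace := by
    rw [← trace_conjTranspose]
    simp only [conjTranspose_mul, hρ.eq, hE.eq, hL.eq, Matrix.mul_assoc]
    rw [trace_mul_comm, Matrix.mul_assoc]
  rw [smul_mul, trace_smul, add_mul, trace_add, hLρE, hρLE, smul_eq_mul, RCLike.star_def,
    add_conj, ← mul_assoc, one_div_mul_cancel two_ne_zero, one_mul, ofReal_re]

end Matrix

theorem classical_FI_le_QFI_general {n : Type} [Fintype n] [DecidableEq n]
    {ι : Type} [Fintype ι]
    (ρ : ℝ → Matrix n n ℂ) (θ : ℝ) (dρ : Matrix n n ℂ)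
    (hpsd : (ρ θ).PosSemidef)
    (E : ι → Matrix n n ℂ) (hE : ∀ x, (E x).PosSemidef) (hsum : ∑ x, E x = 1)
    (L : Matrix n n ℂ) (hL : L.IsHermitian)
    (hSLD : dρ = (1 / 2 : ℂ) • (L * ρ θ + ρ θ * L)) :
    ∑ x ∈ Finset.univ.filter (fun x => ((ρ θ * E x).trace).re ≠ 0),
        ((dρ * E x).trace).re ^ 2 / ((ρ θ * E x).trace).re
      ≤ ((ρ θ * (L * L)).trace).re := by
  have hbound_nonneg (x : ι) : 0 ≤ ((ρ θ * (Lᴴ * E x * L)).trace).re :=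
    hpsd.re_trace_mul_nonneg ((hE x).conjTranspose_mul_mul_same L)
  -- holds also where `P_x = 0`, since `a / 0 = 0`
  have hterm (x : ι) : ((dρ * E x).trace).re ^ 2 / ((ρ θ * E x).trace).re
      ≤ ((ρ θ * (Lᴴ * E x * L)).trace).re := by
    have hCS := hpsd.re_trace_mul_sq_le (hE x) 1 L
    have hP := re_trace_half_smul_anticommutator_mul hpsd.isHermitian (hE x).isHermitian hL
    simp only [conjTranspose_one, Matrix.one_mul, Matrix.mul_one, RCLike.re_to_complex] at hCS hP
    rw [hSLD, hP]
    exact div_le_of_le_mul₀ (hpsd.re_trace_mul_nonneg (hE x)) (hbound_nonneg x)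
      (hCS.trans_eq (mul_comm _ _))
  have hresolution : ∑ x, Lᴴ * E x * L = L * L := by
    rw [← Finset.sum_mul, ← Finset.mul_sum, hsum, Matrix.mul_one, hL.eq]
  calc _ ≤ ∑ x ∈ Finset.univ.filter (fun x => ((ρ θ * E x).trace).re ≠ 0),
          ((ρ θ * (Lᴴ * E x * L)).trace).re := Finset.sum_le_sum fun x _ => hterm x
    _ ≤ ∑ x, ((ρ θ * (Lᴴ * E x * L)).trace).re :=
      Finset.sum_le_sum_of_subset_of_nonneg (Finset.filter_subset _ _)
        fun x _ _ => hbound_nonneg x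
    _ = ((ρ θ * (L * L)).trace).re := by
      rw [← Complex.re_sum, ← trace_sum, ← Finset.mul_sum, hresolution]

/-- The classical Fisher information of the measurement statistics
`P_x(θ) = Tr(ρ_θ E_x)` of a POVM `{E_x}` is bounded by the quantum Fisher
information `Tr(ρ_θ L²)`, where `L` is the symmetric logarithmic derivative. -/
theorem classical_FI_le_QFI {n : Type} [Fintype n] [DecidableEq n]
    {ι : Type} [Fintype ι]
    (ρ : ℝ → Matrix n n ℂ) (θ : ℝ) (dρ : Matrix n n ℂ)
    (hderiv : ∀ i j, HasDerivAt (fun t => ρ t i j) (dρ i j) θ)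
    (hpsd : (ρ θ).PosSemidef) (htr : (ρ θ).trace = 1)
    (E : ι → Matrix n n ℂ) (hE : ∀ x, (E x).PosSemidef) (hsum : ∑ x, E x = 1)
    (L : Matrix n n ℂ) (hL : L.IsHermitian)
    (hSLD : dρ = (1 / 2 : ℂ) • (L * ρ θ + ρ θ * L)) :
    ∑ x ∈ Finset.univ.filter (fun x => ((ρ θ * E x).trace).re ≠ 0),
        ((dρ * E x).trace).re ^ 2 / ((ρ θ * E x).trace).re
      ≤ ((ρ θ * (L * L)).trace).re :=
  classical_FI_le_QFI_general ρ θ dρ hpsd E hE hsum L hL hSLD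
end

section
/- Consider the two-qubit case A = I/2 and B = e^{iπ/4} σ_x / 2 (2×2 matrices). There exist no 2×2 unitary matrices U, V such that, with C = U† A V and D = U† B V, both: (a) C_{ij} conj(D_{ij}) = conj(C_{ij}) D_{ij} for all i, j (i.e., C_{ij} conj(D_{ij}) is real), and (b) for all i, j, C_{ij} = 0 implies D_{ij} = 0. -/
open Matrix

/-- For the two-qubit case `A = I/2`, `B = e^{iπ/4}σ_x/2`, there are no 2×2
unitaries `U, V` such that `C = U†AV`, `D = U†BV` satisfy both QCRB-saturating
conditions: `C_{ij} conj(D_{ij})` real for all `i,j`, and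
`C_{ij} = 0 → D_{ij} = 0`. -/
theorem no_QCRB_saturating_LM_two_qubit
    (A B : Matrix (Fin 2) (Fin 2) ℂ)
    (hA : A = (1 / 2 : ℂ) • 1)
    (hB : B = (Complex.exp (Complex.I * (Real.pi / 4)) / 2) • !![0, 1; 1, 0]) :
    ¬ ∃ U V : Matrix (Fin 2) (Fin 2) ℂ,
      U ∈ Matrix.unitaryGroup (Fin 2) ℂ ∧ V ∈ Matrix.unitaryGroup (Fin 2) ℂ ∧
      (∀ i j, (Uᴴ * A * V) i j * star ((Uᴴ * B * V) i j) =
        star ((Uᴴ * A * V) i j) * (Uᴴ * B * V) i j) ∧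
      (∀ i j, (Uᴴ * A * V) i j = 0 → (Uᴴ * B * V) i j = 0) := by
  subst hA hB
  rintro ⟨U, V, hU, hV, ha, hb⟩
  set ω : ℂ := Complex.exp (Complex.I * (Real.pi / 4)) with hωdef
  have hω0 : ω ≠ 0 := Complex.exp_ne_zero _
  have hωI : ω * ω = Complex.I := by
    rw [hωdef, ← Complex.exp_add]
    have h : Complex.I * (Real.pi / 4) + Complex.I * (Real.pi / 4) = (Real.pi/2 : ℝ) * Complex.I := by
      push_cast; ring
    rw [h, Complex.exp_mul_I, ← Complex.ofReal_cos, ← Complex.ofReal_sin]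
    simp
  have hωc : ω * star ω = 1 := by
    rw [hωdef, RCLike.star_def, ← Complex.exp_conj, ← Complex.exp_add]
    have h : Complex.I * (Real.pi / 4) + (starRingEnd ℂ) (Complex.I * (Real.pi / 4)) = 0 := by
      rw [_root_.map_mul, Complex.conj_I]
      rw [show ((Real.pi : ℂ) / 4) = ((Real.pi / 4 : ℝ) : ℂ) by push_cast; ring,
        Complex.conj_ofReal]
      ring
    rw [h, Complex.exp_zero]
  -- unitarity facts
  have hUU : U * Uᴴ = 1 := by
    have := (Matrix.mem_unitaryGroup_iff).mp hU
    rwa [Matrix.star_eq_conjTranspose] at this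
  have hU'U : Uᴴ * U = 1 := by
    have := (Matrix.mem_unitaryGroup_iff').mp hU
    rwa [Matrix.star_eq_conjTranspose] at this
  have hVV : V * Vᴴ = 1 := by
    have := (Matrix.mem_unitaryGroup_iff).mp hV
    rwa [Matrix.star_eq_conjTranspose] at this
  have hV'V : Vᴴ * V = 1 := by
    have := (Matrix.mem_unitaryGroup_iff').mp hV
    rwa [Matrix.star_eq_conjTranspose] at this
  set σx : Matrix (Fin 2) (Fin 2) ℂ := !![0, 1; 1, 0] with hσ
  set W : Matrix (Fin 2) (Fin 2) ℂ := Uᴴ * V with hW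
  set M : Matrix (Fin 2) (Fin 2) ℂ := Uᴴ * σx * V with hMdef
  set S : Matrix (Fin 2) (Fin 2) ℂ := Uᴴ * σx * U with hSdef
  have hC : Uᴴ * ((1/2 : ℂ) • 1) * V = (1/2 : ℂ) • W := by
    rw [Matrix.mul_smul, Matrix.mul_one, Matrix.smul_mul, hW]
  have hD : Uᴴ * ((ω/2 : ℂ) • σx) * V = (ω/2 : ℂ) • M := by
    rw [Matrix.mul_smul, Matrix.smul_mul, hMdef]
  -- entrywise conditions
  have key : ∀ i j, W i j * star (M i j) = Complex.I * (star (W i j) * M i j) := by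
    intro i j
    have h := ha i j
    rw [hC, hD] at h
    simp only [Matrix.smul_apply, smul_eq_mul, star_mul'] at h
    have hs2 : star ((ω : ℂ)/2) = star ω / 2 := by
      rw [star_div₀]; norm_num
    rw [hs2] at h
    have hs1 : star ((1 : ℂ)/2) = (1:ℂ)/2 := by norm_num
    rw [hs1] at h
    linear_combination (4*ω) * h - (W i j * star (M i j)) * hωc + (star (W i j) * M i j) * hωI
  have hb' : ∀ i j, W i j = 0 → M i j = 0 := by
    intro i j h0
    have h := hb i j
    rw [hC, hD] at h
    simp only [Matrix.smul_apply, smul_eq_mul, h0, mul_zero] at h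
    have := h trivial
    rcases mul_eq_zero.mp this with h' | h'
    · exact absurd h' (by simp [hω0])
    · exact h'
  -- matrix identities
  have hMSW : M = S * W := by
    rw [hSdef, hW, hMdef, Matrix.mul_assoc (Uᴴ * σx), ← Matrix.mul_assoc U, hUU,
      Matrix.one_mul]
  have hMW : M * Wᴴ = S := by
    rw [hMdef, hW, Matrix.conjTranspose_mul, Matrix.conjTranspose_conjTranspose,
      Matrix.mul_assoc, ← Matrix.mul_assoc V, hVV, Matrix.one_mul, hSdef]
  have hWW : Wᴴ * W = 1 := by
    rw [hW, Matrix.conjTranspose_mul, Matrix.conjTranspose_conjTranspose,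
      Matrix.mul_assoc, ← Matrix.mul_assoc U, hUU, Matrix.one_mul, hV'V]
  have hσh : σxᴴ = σx := by
    ext i j
    fin_cases i <;> fin_cases j <;> simp [hσ]
  have hσσ : σx * σx = 1 := by
    have h : σx * σx = !![1, 0; 0, 1] := by rw [hσ]; norm_num [Matrix.mul_fin_two]
    exact h.trans Matrix.one_fin_two.symm
  have hSh : Sᴴ = S := by
    rw [hSdef, Matrix.conjTranspose_mul, Matrix.conjTranspose_mul,
      Matrix.conjTranspose_conjTranspose, hσh, Matrix.mul_assoc]
  have hSS : S * S = 1 := by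
    rw [hSdef]
    simp only [Matrix.mul_assoc]
    rw [← Matrix.mul_assoc U, hUU, Matrix.one_mul, ← Matrix.mul_assoc σx, hσσ,
      Matrix.one_mul, hU'U]
  -- diagonal of S vanishes
  have hdiag : ∀ k, S k k = 0 := by
    intro k
    have h1 : S k k = M k 0 * star (W k 0) + M k 1 * star (W k 1) := by
      rw [← hMW]
      simp [Matrix.mul_apply, Fin.sum_univ_two, Matrix.conjTranspose_apply]
    have h2 : star (S k k) = S k k := by
      conv_rhs => rw [← hSh]
      simp [Matrix.conjTranspose_apply]
    have hs := congrArg star h1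
    rw [h2] at hs
    simp only [star_add, star_mul', star_star] at hs
    have k0 := key k 0
    have k1 := key k 1
    have h3 : S k k * (1 - Complex.I) = 0 := by
      linear_combination hs - Complex.I * h1 + k0 + k1
    have h4 : (1:ℂ) - Complex.I ≠ 0 := by
      intro h
      have := congrArg Complex.im h
      simp at this
    exact (mul_eq_zero.mp h3).resolve_right h4
  -- off-diagonal nonzero
  have hcd : S 0 1 * S 1 0 = 1 := by
    have h := congrFun (congrFun hSS 0) 0
    simp [Matrix.mul_apply, Fin.sum_univ_two, hdiag 0] at h
    exact h
  have hc0 : S 0 1 ≠ 0 := left_ne_zero_of_mul_eq_one hcd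
  have hd0 : S 1 0 ≠ 0 := right_ne_zero_of_mul_eq_one hcd
  have hd : S 1 0 = star (S 0 1) := by
    have := congrFun (congrFun hSh 1) 0
    rw [Matrix.conjTranspose_apply] at this
    exact this.symm
  -- entries of M in terms of W
  have hM0 : M 0 0 = S 0 1 * W 1 0 := by
    rw [hMSW]
    simp [Matrix.mul_apply, Fin.sum_univ_two, hdiag 0]
  have hM1 : M 1 0 = S 1 0 * W 0 0 := by
    rw [hMSW]
    simp [Matrix.mul_apply, Fin.sum_univ_two, hdiag 1]
  -- star(W00) * W10 = 0
  have hp : star (W 0 0) * W 1 0 = 0 := by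
    have k0 := key 0 0
    have k1 := key 1 0
    rw [hM0] at k0
    rw [hM1, hd] at k1
    simp only [star_mul', star_star] at k0 k1
    have h2 : S 0 1 * (star (W 0 0) * W 1 0) * 2 = 0 := by
      linear_combination Complex.I * k0 + k1 + (S 0 1 * (star (W 0 0) * W 1 0)) * Complex.I_mul_I
    have := mul_eq_zero.mp h2
    rcases this with h | h
    · rcases mul_eq_zero.mp h with h' | h'
      · exact absurd h' hc0
      · exact h'
    · norm_num at h
  -- both entries in the first column of W vanish
  have hw : W 0 0 = 0 ∧ W 1 0 = 0 := by
    rcases mul_eq_zero.mp hp with h | h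
    · have hw0 : W 0 0 = 0 := by simpa using congrArg star h
      have hm := hb' 0 0 hw0
      rw [hM0] at hm
      rcases mul_eq_zero.mp hm with h' | h'
      · exact absurd h' hc0
      · exact ⟨hw0, h'⟩
    · have hm := hb' 1 0 h
      rw [hM1] at hm
      rcases mul_eq_zero.mp hm with h' | h'
      · exact absurd h' hd0
      · exact ⟨h', h⟩
  -- contradiction with unitarity of W
  have h1 := congrFun (congrFun hWW 0) 0
  simp [Matrix.mul_apply, Fin.sum_univ_two, Matrix.conjTranspose_apply, hw.1, hw.2] at h1
end

section
/- Let ψ = (|00⟩ + |1+⟩)/√2 and ψ⊥ = (|01⟩ + |1-⟩)/√2 in ℂ²⊗ℂ², where |±⟩ = (|0⟩ ± |1⟩)/√2. Then ⟨ψ|ψ⊥⟩ = 0, and there exists no pair of POVMs {E_x} on the first qubit and {F_y} on the second qubit such that for all x, y: ⟨ψ|E_x ⊗ F_y|ψ⟩ · ⟨ψ⊥|E_x ⊗ F_y|ψ⊥⟩ = 0. -/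
/-!
Write `ψ = ∑ M i j |ij⟩` and `ψ⊥ = ∑ N i j |ij⟩`. For positive semidefinite `E`, `F`, the
expectation `⟨ψ|E ⊗ F|ψ⟩` vanishes iff `(E ⊗ F) ψ = 0`, i.e. `E M Fᵀ = 0`: every row `e` of `E` and
`f` of `F` satisfy `e ⬝ᵥ M f = 0`. As the `E x` sum to `1`, their rows span `ℂ²`; pick two
independent ones `p₀, p₁`, and likewise `q₀, q₁` for `F`. Perfect discrimination makes each pair
`(pᵢ, q_j)` orthogonal for `M` or for `N`. Since `M` and `N` are invertible, the resulting `2 × 2`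
pattern cannot repeat a letter in a row or column, so `M q₀ ∥ N q₁` and `N q₀ ∥ M q₁`. This
contradicts `det [M a, N b] + det [N a, M b] = (det (M + N) - det M - det N) det [a, b]`, as
`det (M + N) - det M - det N = -1/√2 ≠ 0`.
-/

open Matrix Kronecker ComplexOrder

namespace Matrix

section TwoByTwo

theorem det_of_mulVec_add_det_of_mulVec {R : Type*} [CommRing R]
    (M N : Matrix (Fin 2) (Fin 2) R) (a b : Fin 2 → R) :
    (of ![M *ᵥ a, N *ᵥ b]).det + (of ![N *ᵥ a, M *ᵥ b]).det =
      ((M + N).det - M.det - N.det) * (of ![a, b]).det := by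
  simp only [det_fin_two, of_apply, cons_val_zero, cons_val_one, mulVec, dotProduct,
    Fin.sum_univ_two, add_apply]
  ring

variable {K : Type*} [Field K]

theorem det_of_eq_zero_of_dotProduct_eq_zero {p u v : Fin 2 → K} (hp : p ≠ 0)
    (hu : p ⬝ᵥ u = 0) (hv : p ⬝ᵥ v = 0) : (of ![u, v]).det = 0 := by
  by_contra h
  refine hp (eq_zero_of_mulVec_eq_zero h ?_)
  ext i
  fin_cases i <;> simp [mulVec, dotProduct_comm, hu, hv]

theorem exists_det_of_comp_ne_zero {ι : Type*} (u : ι → Fin 2 → K)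
    (hu : ∀ w, (∀ t, u t ⬝ᵥ w = 0) → w = 0) : ∃ s : Fin 2 → ι, (of fun i => u (s i)).det ≠ 0 := by
  by_contra! hdet
  have hzero : ∀ s, u s = 0 := by
    intro s
    have h := hu ![u s 1, -u s 0] fun t => by
      simpa [det_fin_two, dotProduct, Fin.sum_univ_two, sub_eq_add_neg] using hdet ![t, s]
    ext i
    fin_cases i
    · simpa using congrFun h 1
    · simpa using congrFun h 0
  exact one_ne_zero (hu 1 fun t => by simp [hzero t])

theorem not_forall_dotProduct_mulVec_eq_zero_or {M N P Q : Matrix (Fin 2) (Fin 2) K}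
    (hM : M.det ≠ 0) (hN : N.det ≠ 0) (hMN : (M + N).det ≠ M.det + N.det)
    (hP : P.det ≠ 0) (hQ : Q.det ≠ 0) :
    ¬ ∀ i j, P i ⬝ᵥ M *ᵥ Q j = 0 ∨ P i ⬝ᵥ N *ᵥ Q j = 0 := by
  intro h
  have row_ne_zero {A : Matrix (Fin 2) (Fin 2) K} (hA : A.det ≠ 0) (i : Fin 2) : A i ≠ 0 :=
    fun hi => hA (det_eq_zero_of_row_eq_zero i (by simp [hi]))
  have col_alternates {A : Matrix (Fin 2) (Fin 2) K} (hA : A.det ≠ 0) (j : Fin 2)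
      (h₀ : P 0 ⬝ᵥ A *ᵥ Q j = 0) (h₁ : P 1 ⬝ᵥ A *ᵥ Q j = 0) : False := by
    refine row_ne_zero hQ j (eq_zero_of_mulVec_eq_zero hA (eq_zero_of_mulVec_eq_zero hP ?_))
    ext i
    fin_cases i <;> assumption
  have row_alternates {A : Matrix (Fin 2) (Fin 2) K} (hA : A.det ≠ 0) (i : Fin 2)
      (h₀ : P i ⬝ᵥ A *ᵥ Q 0 = 0) (h₁ : P i ⬝ᵥ A *ᵥ Q 1 = 0) : False := by
    refine row_ne_zero hP i (eq_zero_of_vecMul_eq_zero hA (eq_zero_of_mulVec_eq_zero hQ ?_))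
    funext j
    change Q j ⬝ᵥ (P i ᵥ* A) = 0
    rw [dotProduct_comm, ← dotProduct_mulVec]
    fin_cases j <;> assumption
  have crossed {p₀ p₁ : Fin 2 → K} (hp₀ : p₀ ≠ 0) (hp₁ : p₁ ≠ 0)
      (h₀₀ : p₀ ⬝ᵥ M *ᵥ Q 0 = 0) (h₀₁ : p₀ ⬝ᵥ N *ᵥ Q 1 = 0)
      (h₁₀ : p₁ ⬝ᵥ N *ᵥ Q 0 = 0) (h₁₁ : p₁ ⬝ᵥ M *ᵥ Q 1 = 0) : False := by
    have key := det_of_mulVec_add_det_of_mulVec M N (Q 0) (Q 1)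
    rw [det_of_eq_zero_of_dotProduct_eq_zero hp₀ h₀₀ h₀₁,
      det_of_eq_zero_of_dotProduct_eq_zero hp₁ h₁₀ h₁₁, add_zero, eq_comm] at key
    rcases mul_eq_zero.mp key with hk | hk
    · exact hMN (by linear_combination hk)
    · exact hQ (by simpa [det_fin_two] using hk)
  rcases h 0 0 with h₀₀ | h₀₀
  · have h₁₀ := (h 1 0).resolve_left (col_alternates hM 0 h₀₀)
    have h₀₁ := (h 0 1).resolve_left (row_alternates hM 0 h₀₀)
    have h₁₁ := (h 1 1).resolve_right (col_alternates hN 1 h₀₁)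
    exact crossed (row_ne_zero hP 0) (row_ne_zero hP 1) h₀₀ h₀₁ h₁₀ h₁₁
  · have h₁₀ := (h 1 0).resolve_right (col_alternates hN 0 h₀₀)
    have h₀₁ := (h 0 1).resolve_right (row_alternates hN 0 h₀₀)
    have h₁₁ := (h 1 1).resolve_left (col_alternates hM 1 h₀₁)
    exact crossed (row_ne_zero hP 1) (row_ne_zero hP 0) h₁₀ h₁₁ h₀₀ h₀₁

end TwoByTwo

theorem eq_zero_of_forall_dotProduct_eq_zero_of_sum_eq_one {ι n R : Type*} [Fintype ι]
    [Fintype n] [DecidableEq n] [NonAssocSemiring R] {E : ι → Matrix n n R} (hE : ∑ x, E x = 1)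
    {w : n → R} (hw : ∀ x i, E x i ⬝ᵥ w = 0) : w = 0 := by
  rw [← one_mulVec w, ← hE, sum_mulVec]
  exact Finset.sum_eq_zero fun x _ => funext (hw x)

theorem dotProduct_mulVec_eq_zero_of_star_vec_dotProduct_kronecker_mulVec_eq_zero
    {𝕜 m n : Type*} [RCLike 𝕜] [Fintype m] [Fintype n] {E : Matrix m m 𝕜} {F : Matrix n n 𝕜}
    (hE : E.PosSemidef) (hF : F.PosSemidef) {g : Matrix m n 𝕜}
    (h : star (vec gᵀ) ⬝ᵥ (E ⊗ₖ F) *ᵥ vec gᵀ = 0) (i : m) (j : n) :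
    E i ⬝ᵥ g *ᵥ F j = 0 := by
  have hzero := ((hE.kronecker hF).dotProduct_mulVec_zero_iff _).mp h
  rw [kronecker_mulVec_vec, vec_eq_zero_iff] at hzero
  have hEgF : E * (g * Fᵀ) = 0 := by
    simpa [transpose_mul, Matrix.mul_assoc] using congrArg transpose hzero
  simpa [mul_apply, dotProduct, mulVec] using congrFun (congrFun hEgF i) j

end Matrix

/-- `ψ = (|00⟩ + |1+⟩)/√2` and `ψ⊥ = (|01⟩ + |1-⟩)/√2` are orthogonal, and no
pair of local POVMs `{E_x}`, `{F_y}` perfectly distinguishes them, i.e.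
satisfies `⟨ψ|E_x⊗F_y|ψ⟩ ⟨ψ⊥|E_x⊗F_y|ψ⊥⟩ = 0` for all `x, y`. -/
theorem LM_cannot_distinguish (ψ ψp : Fin 2 × Fin 2 → ℂ)
    (hψ : ψ = fun p => !![((Real.sqrt 2)⁻¹ : ℂ), 0; 1 / 2, 1 / 2] p.1 p.2)
    (hψp : ψp = fun p => !![0, ((Real.sqrt 2)⁻¹ : ℂ); 1 / 2, -(1 / 2)] p.1 p.2) :
    star ψ ⬝ᵥ ψp = 0 ∧
    ∀ (ι κ : Type) [Fintype ι] [Fintype κ]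
      (E : ι → Matrix (Fin 2) (Fin 2) ℂ) (F : κ → Matrix (Fin 2) (Fin 2) ℂ),
      (∀ x, (E x).PosSemidef) → (∀ y, (F y).PosSemidef) →
      (∑ x, E x) = 1 → (∑ y, F y) = 1 →
      ¬ (∀ x y, (star ψ ⬝ᵥ (E x ⊗ₖ F y).mulVec ψ) *
          (star ψp ⬝ᵥ (E x ⊗ₖ F y).mulVec ψp) = 0) := by
  subst hψ hψp
  set c : ℂ := (Real.sqrt 2)⁻¹
  set M : Matrix (Fin 2) (Fin 2) ℂ := !![c, 0; 1 / 2, 1 / 2]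
  set N : Matrix (Fin 2) (Fin 2) ℂ := !![0, c; 1 / 2, -(1 / 2)]
  have hc : c ≠ 0 := by simp [c]
  refine ⟨by simp [dotProduct, Fintype.sum_prod_type, M, N], ?_⟩
  intro ι κ _ _ E F hE hF hEsum hFsum h
  obtain ⟨s, hs⟩ := exists_det_of_comp_ne_zero (fun p : ι × Fin 2 => E p.1 p.2)
    fun w hw => eq_zero_of_forall_dotProduct_eq_zero_of_sum_eq_one hEsum fun x i => hw (x, i)
  obtain ⟨t, ht⟩ := exists_det_of_comp_ne_zero (fun p : κ × Fin 2 => F p.1 p.2)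
    fun w hw => eq_zero_of_forall_dotProduct_eq_zero_of_sum_eq_one hFsum fun y j => hw (y, j)
  have hM : M.det = c / 2 := by simp [M, det_fin_two]; ring
  have hN : N.det = -(c / 2) := by simp [N, det_fin_two]; ring
  have hMN : (M + N).det = -c := by simp [M, N, det_fin_two]; ring
  refine not_forall_dotProduct_mulVec_eq_zero_or (M := M) (N := N) (by simp [hM, hc])
    (by simp [hN, hc]) (by simp [hM, hN, hMN, hc]) hs ht fun i j => ?_
  -- `h0` is about `fun p => M p.1 p.2`, which is `vec Mᵀ` by definition
  rcases mul_eq_zero.mp (h (s i).1 (t j).1) with h0 | h0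
  · exact .inl (dotProduct_mulVec_eq_zero_of_star_vec_dotProduct_kronecker_mulVec_eq_zero
      (hE _) (hF _) (g := M) h0 _ _)
  · exact .inr (dotProduct_mulVec_eq_zero_of_star_vec_dotProduct_kronecker_mulVec_eq_zero
      (hE _) (hF _) (g := N) h0 _ _)
end

section
/- If ψ, ψ⊥ ∈ ℂ²⊗ℂ² are both entangled (neither is a product vector), ⟨ψ|ψ⊥⟩ = 0, and there exist orthonormal bases {e₁¹, e₂¹} of the first factor and {e₁², e₂²} of the second factor such that ⟨e_i¹⊗e_j²|ψ⟩ · ⟨ψ⊥|e_i¹⊗e_j²⟩ = 0 for all i, j, then ψ = λ₁ e₁¹⊗e₁² + λ₂ e₂¹⊗e₂² and ψ⊥ = μ₁ e₁¹⊗e₂² + μ₂ e₂¹⊗e₁² for some nonzero complex numbers λ₁, λ₂, μ₁, μ₂ (up to relabeling of the basis of the second factor). -/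
open Matrix


/-- A 2×2 matrix with vanishing determinant is an outer product. -/
lemma outer2 (a : Fin 2 → Fin 2 → ℂ) (h : a 0 0 * a 1 1 - a 0 1 * a 1 0 = 0) :
    ∃ u v : Fin 2 → ℂ, ∀ i j, a i j = u i * v j := by
  by_cases h00 : a 0 0 = 0
  · by_cases h01 : a 0 1 = 0
    · exact ⟨![0, 1], ![a 1 0, a 1 1], by
        intro i j; fin_cases i <;> fin_cases j <;> simp [h00, h01]⟩
    · have h10 : a 1 0 = 0 := by
        have h' : a 0 1 * a 1 0 = 0 := by
          rw [h00, zero_mul, zero_sub, neg_eq_zero] at h; exact h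
        rcases mul_eq_zero.mp h' with h'' | h''
        · exact absurd h'' h01
        · exact h''
      exact ⟨![a 0 1, a 1 1], ![0, 1], by
        intro i j; fin_cases i <;> fin_cases j <;> simp [h00, h10]⟩
  · refine ⟨![a 0 0, a 1 0], ![1, a 0 1 / a 0 0], ?_⟩
    intro i j
    fin_cases i <;> fin_cases j <;> simp
    · field_simp
    · field_simp
      linear_combination h

/-- Coefficient of a two-qubit vector in a product basis. -/
noncomputable def coeff2 (e1 e2 : Fin 2 → Fin 2 → ℂ) (ψ : Fin 2 × Fin 2 → ℂ) (i j : Fin 2) : ℂ :=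
  star (fun q : Fin 2 × Fin 2 => e1 i q.1 * e2 j q.2) ⬝ᵥ ψ

lemma expand2 (ψ : Fin 2 × Fin 2 → ℂ) (e1 e2 : Fin 2 → Fin 2 → ℂ)
    (he1 : ∀ i j, star (e1 i) ⬝ᵥ e1 j = if i = j then 1 else 0)
    (he2 : ∀ i j, star (e2 i) ⬝ᵥ e2 j = if i = j then 1 else 0)
    (p : Fin 2 × Fin 2) :
    ψ p = ∑ i, ∑ j, coeff2 e1 e2 ψ i j * (e1 i p.1 * e2 j p.2) := by
  set E1 : Matrix (Fin 2) (Fin 2) ℂ := Matrix.of fun q i => e1 i q with hE1def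
  set E2 : Matrix (Fin 2) (Fin 2) ℂ := Matrix.of fun q j => e2 j q with hE2def
  have hE1 : E1ᴴ * E1 = 1 := by
    ext i j
    have := he1 i j
    simpa [hE1def, Matrix.mul_apply, Matrix.conjTranspose_apply, dotProduct,
      Matrix.one_apply] using this
  have hE2 : E2ᴴ * E2 = 1 := by
    ext i j
    have := he2 i j
    simpa [hE2def, Matrix.mul_apply, Matrix.conjTranspose_apply, dotProduct,
      Matrix.one_apply] using this
  have hE1' : E1 * E1ᴴ = 1 := mul_eq_one_comm.mp hE1
  have hE2' : E2 * E2ᴴ = 1 := mul_eq_one_comm.mp hE2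
  set M : Matrix (Fin 2) (Fin 2) ℂ := Matrix.of fun q r => ψ (q, r) with hMdef
  set A : Matrix (Fin 2) (Fin 2) ℂ := E1ᴴ * M * (E2ᴴ)ᵀ with hAdef
  have hM : E1 * A * E2ᵀ = M := by
    have h2 : (E2ᴴ)ᵀ * E2ᵀ = 1 := by
      rw [← Matrix.transpose_mul, hE2', Matrix.transpose_one]
    have hassoc : E1 * (E1ᴴ * M * (E2ᴴ)ᵀ) * E2ᵀ = (E1 * E1ᴴ) * M * ((E2ᴴ)ᵀ * E2ᵀ) := by
      noncomm_ring
    rw [hAdef, hassoc, hE1', h2, one_mul, mul_one]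
  have hA : ∀ i j, A i j = coeff2 e1 e2 ψ i j := by
    intro i j
    simp only [hAdef, hMdef, hE1def, hE2def, coeff2, Matrix.mul_apply,
      Matrix.conjTranspose_apply, Matrix.transpose_apply, Matrix.of_apply, dotProduct,
      Fintype.sum_prod_type, Fin.sum_univ_two, Pi.star_apply, star_mul']
    ring
  have := congrFun (congrFun hM p.1) p.2
  calc ψ p = M p.1 p.2 := rfl
    _ = (E1 * A * E2ᵀ) p.1 p.2 := this.symm
    _ = ∑ i, ∑ j, coeff2 e1 e2 ψ i j * (e1 i p.1 * e2 j p.2) := by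
        simp only [Matrix.mul_apply, Fin.sum_univ_two, hE1def, hE2def,
          Matrix.transpose_apply, Matrix.of_apply, hA]
        ring

lemma coeff_det_ne (ψ : Fin 2 × Fin 2 → ℂ) (e1 e2 : Fin 2 → Fin 2 → ℂ)
    (hent : ¬ ∃ (u v : Fin 2 → ℂ), ψ = fun p => u p.1 * v p.2)
    (he1 : ∀ i j, star (e1 i) ⬝ᵥ e1 j = if i = j then 1 else 0)
    (he2 : ∀ i j, star (e2 i) ⬝ᵥ e2 j = if i = j then 1 else 0) :
    coeff2 e1 e2 ψ 0 0 * coeff2 e1 e2 ψ 1 1 - coeff2 e1 e2 ψ 0 1 * coeff2 e1 e2 ψ 1 0 ≠ 0 := by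
  intro h0
  obtain ⟨u, v, huv⟩ := outer2 (fun i j => coeff2 e1 e2 ψ i j) h0
  apply hent
  refine ⟨fun q => u 0 * e1 0 q + u 1 * e1 1 q, fun q => v 0 * e2 0 q + v 1 * e2 1 q, ?_⟩
  funext p
  rw [expand2 ψ e1 e2 he1 he2 p]
  simp only [Fin.sum_univ_two, huv]
  ring

/-- If `ψ, ψ⊥ ∈ ℂ²⊗ℂ²` are both entangled, orthogonal, and a product
orthonormal basis perfectly distinguishes them, then (up to relabeling of the
second-factor basis) `ψ = λ₁ e₁¹⊗e₁² + λ₂ e₂¹⊗e₂²` and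
`ψ⊥ = μ₁ e₁¹⊗e₂² + μ₂ e₂¹⊗e₁²` with nonzero coefficients. -/
theorem entangled_distinguished_structure (ψ ψp : Fin 2 × Fin 2 → ℂ)
    (hψent : ¬ ∃ (u v : Fin 2 → ℂ), ψ = fun p => u p.1 * v p.2)
    (hψpent : ¬ ∃ (u v : Fin 2 → ℂ), ψp = fun p => u p.1 * v p.2)
    (hor : star ψ ⬝ᵥ ψp = 0)
    (e1 e2 : Fin 2 → (Fin 2 → ℂ))
    (he1 : ∀ i j, star (e1 i) ⬝ᵥ e1 j = if i = j then 1 else 0)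
    (he2 : ∀ i j, star (e2 i) ⬝ᵥ e2 j = if i = j then 1 else 0)
    (hdist : ∀ i j,
      (star (fun p : Fin 2 × Fin 2 => e1 i p.1 * e2 j p.2) ⬝ᵥ ψ) *
        (star ψp ⬝ᵥ (fun p : Fin 2 × Fin 2 => e1 i p.1 * e2 j p.2)) = 0) :
    ∃ (g : Equiv.Perm (Fin 2)) (lam₁ lam₂ mu₁ mu₂ : ℂ),
      lam₁ ≠ 0 ∧ lam₂ ≠ 0 ∧ mu₁ ≠ 0 ∧ mu₂ ≠ 0 ∧
      ψ = (fun p => lam₁ * (e1 0 p.1 * e2 (g 0) p.2) + lam₂ * (e1 1 p.1 * e2 (g 1) p.2)) ∧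
      ψp = (fun p => mu₁ * (e1 0 p.1 * e2 (g 1) p.2) + mu₂ * (e1 1 p.1 * e2 (g 0) p.2)) := by
  classical
  have hdisj : ∀ i j, coeff2 e1 e2 ψ i j = 0 ∨ coeff2 e1 e2 ψp i j = 0 := by
    intro i j
    have hrw : coeff2 e1 e2 ψp i j
        = star (star ψp ⬝ᵥ fun p : Fin 2 × Fin 2 => e1 i p.1 * e2 j p.2) := by
      unfold coeff2; exact Matrix.star_dotProduct _ _
    rcases mul_eq_zero.mp (hdist i j) with h' | h'
    · exact Or.inl h'
    · right; rw [hrw, h', star_zero]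
  have hda := coeff_det_ne ψ e1 e2 hψent he1 he2
  have hdb := coeff_det_ne ψp e1 e2 hψpent he1 he2
  have hsplit : (coeff2 e1 e2 ψ 0 0 ≠ 0 ∧ coeff2 e1 e2 ψ 1 1 ≠ 0) ∨
      (coeff2 e1 e2 ψ 0 1 ≠ 0 ∧ coeff2 e1 e2 ψ 1 0 ≠ 0) := by
    by_contra hc
    push_neg at hc
    apply hda
    rcases eq_or_ne (coeff2 e1 e2 ψ 0 0) 0 with h00 | h00
    · rcases eq_or_ne (coeff2 e1 e2 ψ 0 1) 0 with h01 | h01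
      · rw [h00, h01]; ring
      · rw [h00, hc.2 h01]; ring
    · rw [hc.1 h00]
      rcases eq_or_ne (coeff2 e1 e2 ψ 0 1) 0 with h01 | h01
      · rw [h01]; ring
      · rw [hc.2 h01]; ring
  rcases hsplit with ⟨h00, h11⟩ | ⟨h01, h10⟩
  · -- ψ on the diagonal, g = 1
    have hb00 : coeff2 e1 e2 ψp 0 0 = 0 := (hdisj 0 0).resolve_left h00
    have hb11 : coeff2 e1 e2 ψp 1 1 = 0 := (hdisj 1 1).resolve_left h11
    have hbprod : coeff2 e1 e2 ψp 0 1 * coeff2 e1 e2 ψp 1 0 ≠ 0 := by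
      intro hz; apply hdb; rw [hb00, hz]; ring
    obtain ⟨hb01, hb10⟩ := mul_ne_zero_iff.mp hbprod
    have ha01 : coeff2 e1 e2 ψ 0 1 = 0 := (hdisj 0 1).resolve_right hb01
    have ha10 : coeff2 e1 e2 ψ 1 0 = 0 := (hdisj 1 0).resolve_right hb10
    refine ⟨1, coeff2 e1 e2 ψ 0 0, coeff2 e1 e2 ψ 1 1,
      coeff2 e1 e2 ψp 0 1, coeff2 e1 e2 ψp 1 0, h00, h11, hb01, hb10, ?_, ?_⟩
    · funext p
      rw [expand2 ψ e1 e2 he1 he2 p]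
      simp only [Fin.sum_univ_two, ha01, ha10, zero_mul, add_zero, zero_add,
        Equiv.Perm.coe_one, id_eq]
    · funext p
      rw [expand2 ψp e1 e2 he1 he2 p]
      simp only [Fin.sum_univ_two, hb00, hb11, zero_mul, add_zero, zero_add,
        Equiv.Perm.coe_one, id_eq]
  · -- ψ on the antidiagonal, g = swap
    have hb01 : coeff2 e1 e2 ψp 0 1 = 0 := (hdisj 0 1).resolve_left h01
    have hb10 : coeff2 e1 e2 ψp 1 0 = 0 := (hdisj 1 0).resolve_left h10
    have hbprod : coeff2 e1 e2 ψp 0 0 * coeff2 e1 e2 ψp 1 1 ≠ 0 := by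
      intro hz; apply hdb; rw [hb01, hz]; ring
    obtain ⟨hb00, hb11⟩ := mul_ne_zero_iff.mp hbprod
    have ha00 : coeff2 e1 e2 ψ 0 0 = 0 := (hdisj 0 0).resolve_right hb00
    have ha11 : coeff2 e1 e2 ψ 1 1 = 0 := (hdisj 1 1).resolve_right hb11
    refine ⟨Equiv.swap 0 1, coeff2 e1 e2 ψ 0 1, coeff2 e1 e2 ψ 1 0,
      coeff2 e1 e2 ψp 0 0, coeff2 e1 e2 ψp 1 1, h01, h10, hb00, hb11, ?_, ?_⟩
    · funext p
      rw [expand2 ψ e1 e2 he1 he2 p]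
      simp only [Fin.sum_univ_two, ha00, ha11, zero_mul, add_zero, zero_add,
        Equiv.swap_apply_left, Equiv.swap_apply_right]
    · funext p
      rw [expand2 ψp e1 e2 he1 he2 p]
      simp only [Fin.sum_univ_two, hb01, hb10, zero_mul, add_zero, zero_add,
        Equiv.swap_apply_left, Equiv.swap_apply_right]
end

section
/- Let A = diag(√2/2, 1/2, 1/2) and B = diag(√2 i/2, -i/2, -i/2) be 3×3 matrices. There exist no 3×3 unitary matrices U, V such that with C = U† A V and D = U† B V: C_{ij} conj(D_{ij}) ∈ ℝ for all i, j, and (C_{ij} = 0 ⟹ D_{ij} = 0) for all i, j. -/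
set_option maxHeartbeats 1000000

open Matrix Complex

lemma aux_bloch
 (ax1 ay1 az1 ax2 ay2 az2 ax3 ay3 az3
  bx1 by1 bz1 bx2 by2 bz2 bx3 by3 bz3 : ℝ)
 (hA1 : ax1^2 + ay1^2 + az1^2 = 4/9)
 (hA2 : ax2^2 + ay2^2 + az2^2 = 4/9)
 (hA3 : ax3^2 + ay3^2 + az3^2 = 4/9)
 (hB1 : bx1^2 + by1^2 + bz1^2 = 4/9)
 (hB2 : bx2^2 + by2^2 + bz2^2 = 4/9)
 (hB3 : bx3^2 + by3^2 + bz3^2 = 4/9)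
 (hSAx : ax1 + ax2 + ax3 = 0) (hSAy : ay1 + ay2 + ay3 = 0) (hSAz : az1 + az2 + az3 = 0)
 (hSBx : bx1 + bx2 + bx3 = 0) (hSBy : by1 + by2 + by3 = 0) (hSBz : bz1 + bz2 + bz3 = 0)
 (h11 : ax1*bx1 + ay1*by1 + az1*bz1 = 0)
 (h12 : ax1*bx2 + ay1*by2 + az1*bz2 = 0)
 (h21 : ax2*bx1 + ay2*by1 + az2*bz1 = 0)
 (h22 : ax2*bx2 + ay2*by2 + az2*bz2 = 0) : False := by
  have e1 : ax3 = -ax1 - ax2 := by linarith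
  have e2 : ay3 = -ay1 - ay2 := by linarith
  have e3 : az3 = -az1 - az2 := by linarith
  have f1 : bx3 = -bx1 - bx2 := by linarith
  have f2 : by3 = -by1 - by2 := by linarith
  have f3 : bz3 = -bz1 - bz2 := by linarith
  subst e1 e2 e3 f1 f2 f3
  have ha12 : ax1*ax2 + ay1*ay2 + az1*az2 = -2/9 := by
    linear_combination (hA3 - hA1 - hA2)/2
  have hb12 : bx1*bx2 + by1*by2 + bz1*bz2 = -2/9 := by
    linear_combination (hB3 - hB1 - hB2)/2
  -- cross product c = a1 × a2
  have hK : (ay1*az2 - az1*ay2)^2 + (az1*ax2 - ax1*az2)^2 + (ax1*ay2 - ay1*ax2)^2 = 4/27 := by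
    linear_combination (ax2^2+ay2^2+az2^2)*hA1 + (4/9)*hA2 + (2/9 - (ax1*ax2+ay1*ay2+az1*az2))*ha12
  -- b1 × c = 0
  have u11 : by1*(ax1*ay2 - ay1*ax2) - bz1*(az1*ax2 - ax1*az2) = 0 := by
    linear_combination ax1*h21 - ax2*h11
  have u12 : bz1*(ay1*az2 - az1*ay2) - bx1*(ax1*ay2 - ay1*ax2) = 0 := by
    linear_combination ay1*h21 - ay2*h11
  have u13 : bx1*(az1*ax2 - ax1*az2) - by1*(ay1*az2 - az1*ay2) = 0 := by
    linear_combination az1*h21 - az2*h11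
  have u21 : by2*(ax1*ay2 - ay1*ax2) - bz2*(az1*ax2 - ax1*az2) = 0 := by
    linear_combination ax1*h22 - ax2*h12
  have u22 : bz2*(ay1*az2 - az1*ay2) - bx2*(ax1*ay2 - ay1*ax2) = 0 := by
    linear_combination ay1*h22 - ay2*h12
  have u23 : bx2*(az1*ax2 - ax1*az2) - by2*(ay1*az2 - az1*ay2) = 0 := by
    linear_combination az1*h22 - az2*h12
  -- t_j = b_j · c
  have E1 : (bx1*(ay1*az2 - az1*ay2) + by1*(az1*ax2 - ax1*az2) + bz1*(ax1*ay2 - ay1*ax2))^2 = 16/243 := by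
    linear_combination ((ay1*az2 - az1*ay2)^2 + (az1*ax2 - ax1*az2)^2 + (ax1*ay2 - ay1*ax2)^2)*hB1 + (4/9)*hK - (by1*(ax1*ay2 - ay1*ax2) - bz1*(az1*ax2 - ax1*az2))*u11 - (bz1*(ay1*az2 - az1*ay2) - bx1*(ax1*ay2 - ay1*ax2))*u12 - (bx1*(az1*ax2 - ax1*az2) - by1*(ay1*az2 - az1*ay2))*u13
  have E2 : (bx2*(ay1*az2 - az1*ay2) + by2*(az1*ax2 - ax1*az2) + bz2*(ax1*ay2 - ay1*ax2))^2 = 16/243 := by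
    linear_combination ((ay1*az2 - az1*ay2)^2 + (az1*ax2 - ax1*az2)^2 + (ax1*ay2 - ay1*ax2)^2)*hB2 + (4/9)*hK - (by2*(ax1*ay2 - ay1*ax2) - bz2*(az1*ax2 - ax1*az2))*u21 - (bz2*(ay1*az2 - az1*ay2) - bx2*(ax1*ay2 - ay1*ax2))*u22 - (bx2*(az1*ax2 - ax1*az2) - by2*(ay1*az2 - az1*ay2))*u23
  have E3 : (bx1*(ay1*az2 - az1*ay2) + by1*(az1*ax2 - ax1*az2) + bz1*(ax1*ay2 - ay1*ax2)) * (bx2*(ay1*az2 - az1*ay2) + by2*(az1*ax2 - ax1*az2) + bz2*(ax1*ay2 - ay1*ax2)) = -8/243 := by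
    linear_combination ((ay1*az2 - az1*ay2)^2 + (az1*ax2 - ax1*az2)^2 + (ax1*ay2 - ay1*ax2)^2)*hb12 + (-2/9)*hK - (by2*(ax1*ay2 - ay1*ax2) - bz2*(az1*ax2 - ax1*az2))*u11 - (bz2*(ay1*az2 - az1*ay2) - bx2*(ax1*ay2 - ay1*ax2))*u12 - (bx2*(az1*ax2 - ax1*az2) - by2*(ay1*az2 - az1*ay2))*u13
  have final : (-192/59049 : ℝ) = 0 := by
    linear_combination ((bx2*(ay1*az2 - az1*ay2) + by2*(az1*ax2 - ax1*az2) + bz2*(ax1*ay2 - ay1*ax2)))^2*E1 + (16/243 : ℝ)*E2 + ((8:ℝ)/243 - (bx1*(ay1*az2 - az1*ay2) + by1*(az1*ax2 - ax1*az2) + bz1*(ax1*ay2 - ay1*ax2))*(bx2*(ay1*az2 - az1*ay2) + by2*(az1*ax2 - ax1*az2) + bz2*(ax1*ay2 - ay1*ax2)))*E3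
  norm_num at final

/-- For `A = diag(√2/2, 1/2, 1/2)` and `B = diag(√2 i/2, -i/2, -i/2)`, there
are no 3×3 unitaries `U, V` such that `C = U†AV`, `D = U†BV` satisfy both:
`C_{ij} conj(D_{ij})` is real for all `i, j`, and `C_{ij} = 0 → D_{ij} = 0`. -/
theorem no_QCRB_saturating_projective_LM
    (A B : Matrix (Fin 3) (Fin 3) ℂ)
    (hA : A = Matrix.diagonal ![(Real.sqrt 2 : ℂ) / 2, 1 / 2, 1 / 2])
    (hB : B = Matrix.diagonal ![(Real.sqrt 2 : ℂ) * Complex.I / 2,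
      -Complex.I / 2, -Complex.I / 2]) :
    ¬ ∃ U V : Matrix (Fin 3) (Fin 3) ℂ,
      U ∈ Matrix.unitaryGroup (Fin 3) ℂ ∧ V ∈ Matrix.unitaryGroup (Fin 3) ℂ ∧
      (∀ i j, (Uᴴ * A * V) i j * star ((Uᴴ * B * V) i j) =
        star ((Uᴴ * A * V) i j) * (Uᴴ * B * V) i j) ∧
      (∀ i j, (Uᴴ * A * V) i j = 0 → (Uᴴ * B * V) i j = 0) := by
  subst hA hB
  rintro ⟨U, V, hU, hV, hreal, -⟩
  have hUrow : U * Uᴴ = 1 := by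
    have := hU.2; rwa [Matrix.star_eq_conjTranspose] at this
  have hUcol : Uᴴ * U = 1 := by
    have := hU.1; rwa [Matrix.star_eq_conjTranspose] at this
  have hVrow : V * Vᴴ = 1 := by
    have := hV.2; rwa [Matrix.star_eq_conjTranspose] at this
  have hVcol : Vᴴ * V = 1 := by
    have := hV.1; rwa [Matrix.star_eq_conjTranspose] at this
  have hsq2 : ((Real.sqrt 2 : ℝ) : ℂ) * ((Real.sqrt 2 : ℝ) : ℂ) = 2 := by
    norm_cast
    exact_mod_cast Real.mul_self_sqrt (by norm_num)
  -- row orthonormality facts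
  have hUr00 : U 0 0 * (starRingEnd ℂ) (U 0 0) + U 0 1 * (starRingEnd ℂ) (U 0 1) + U 0 2 * (starRingEnd ℂ) (U 0 2) = 1 := by
    have h' := congrFun (congrFun hUrow 0) 0
    simpa [Matrix.mul_apply, Matrix.conjTranspose_apply, Fin.sum_univ_three, Matrix.one_apply] using h'
  have hUr11 : U 1 0 * (starRingEnd ℂ) (U 1 0) + U 1 1 * (starRingEnd ℂ) (U 1 1) + U 1 2 * (starRingEnd ℂ) (U 1 2) = 1 := by
    have h' := congrFun (congrFun hUrow 1) 1
    simpa [Matrix.mul_apply, Matrix.conjTranspose_apply, Fin.sum_univ_three, Matrix.one_apply] using h'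
  have hUr22 : U 2 0 * (starRingEnd ℂ) (U 2 0) + U 2 1 * (starRingEnd ℂ) (U 2 1) + U 2 2 * (starRingEnd ℂ) (U 2 2) = 1 := by
    have h' := congrFun (congrFun hUrow 2) 2
    simpa [Matrix.mul_apply, Matrix.conjTranspose_apply, Fin.sum_univ_three, Matrix.one_apply] using h'
  have hUr21 : U 2 0 * (starRingEnd ℂ) (U 1 0) + U 2 1 * (starRingEnd ℂ) (U 1 1) + U 2 2 * (starRingEnd ℂ) (U 1 2) = 0 := by
    have h' := congrFun (congrFun hUrow 2) 1
    simpa [Matrix.mul_apply, Matrix.conjTranspose_apply, Fin.sum_univ_three, Matrix.one_apply] using h'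
  have hUr12 : U 1 0 * (starRingEnd ℂ) (U 2 0) + U 1 1 * (starRingEnd ℂ) (U 2 1) + U 1 2 * (starRingEnd ℂ) (U 2 2) = 0 := by
    have h' := congrFun (congrFun hUrow 1) 2
    simpa [Matrix.mul_apply, Matrix.conjTranspose_apply, Fin.sum_univ_three, Matrix.one_apply] using h'
  have hVr00 : V 0 0 * (starRingEnd ℂ) (V 0 0) + V 0 1 * (starRingEnd ℂ) (V 0 1) + V 0 2 * (starRingEnd ℂ) (V 0 2) = 1 := by
    have h' := congrFun (congrFun hVrow 0) 0
    simpa [Matrix.mul_apply, Matrix.conjTranspose_apply, Fin.sum_univ_three, Matrix.one_apply] using h'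
  have hVr11 : V 1 0 * (starRingEnd ℂ) (V 1 0) + V 1 1 * (starRingEnd ℂ) (V 1 1) + V 1 2 * (starRingEnd ℂ) (V 1 2) = 1 := by
    have h' := congrFun (congrFun hVrow 1) 1
    simpa [Matrix.mul_apply, Matrix.conjTranspose_apply, Fin.sum_univ_three, Matrix.one_apply] using h'
  have hVr22 : V 2 0 * (starRingEnd ℂ) (V 2 0) + V 2 1 * (starRingEnd ℂ) (V 2 1) + V 2 2 * (starRingEnd ℂ) (V 2 2) = 1 := by
    have h' := congrFun (congrFun hVrow 2) 2
    simpa [Matrix.mul_apply, Matrix.conjTranspose_apply, Fin.sum_univ_three, Matrix.one_apply] using h'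
  have hVr12 : V 1 0 * (starRingEnd ℂ) (V 2 0) + V 1 1 * (starRingEnd ℂ) (V 2 1) + V 1 2 * (starRingEnd ℂ) (V 2 2) = 0 := by
    have h' := congrFun (congrFun hVrow 1) 2
    simpa [Matrix.mul_apply, Matrix.conjTranspose_apply, Fin.sum_univ_three, Matrix.one_apply] using h'
  have hVr21 : V 2 0 * (starRingEnd ℂ) (V 1 0) + V 2 1 * (starRingEnd ℂ) (V 1 1) + V 2 2 * (starRingEnd ℂ) (V 1 2) = 0 := by
    have h' := congrFun (congrFun hVrow 2) 1
    simpa [Matrix.mul_apply, Matrix.conjTranspose_apply, Fin.sum_univ_three, Matrix.one_apply] using h'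
  -- column norms
  have hUc : ∀ i : Fin 3, (starRingEnd ℂ) (U 0 i) * U 0 i + (starRingEnd ℂ) (U 1 i) * U 1 i + (starRingEnd ℂ) (U 2 i) * U 2 i = 1 := by
    intro i
    have h' := congrFun (congrFun hUcol i) i
    simpa [Matrix.mul_apply, Matrix.conjTranspose_apply, Fin.sum_univ_three, Matrix.one_apply_eq] using h'
  have hVc : ∀ j : Fin 3, (starRingEnd ℂ) (V 0 j) * V 0 j + (starRingEnd ℂ) (V 1 j) * V 1 j + (starRingEnd ℂ) (V 2 j) * V 2 j = 1 := by
    intro j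
    have h' := congrFun (congrFun hVcol j) j
    simpa [Matrix.mul_apply, Matrix.conjTranspose_apply, Fin.sum_univ_three, Matrix.one_apply_eq] using h'
  -- the key pointwise modulus identity
  have key : ∀ i j : Fin 3, 2 * ((starRingEnd ℂ) (U 0 i) * U 0 i) * ((starRingEnd ℂ) (V 0 j) * V 0 j) =
      ((starRingEnd ℂ) (U 1 i) * V 1 j + (starRingEnd ℂ) (U 2 i) * V 2 j) *
      (U 1 i * (starRingEnd ℂ) (V 1 j) + U 2 i * (starRingEnd ℂ) (V 2 j)) := by
    intro i j
    have hkey := hreal i j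
    simp [Matrix.mul_apply, Fin.sum_univ_three, Matrix.conjTranspose_apply,
      Matrix.diagonal_apply, Matrix.cons_val_zero, Matrix.cons_val_one, Matrix.head_cons,
      Matrix.cons_val_two, Matrix.tail_cons, _root_.map_mul, map_div₀, Complex.conj_I,
      Complex.conj_ofReal] at hkey
    apply mul_left_cancel₀ Complex.I_ne_zero
    linear_combination (-2 : ℂ) * hkey - Complex.I * ((starRingEnd ℂ) (U 0 i) * U 0 i) * ((starRingEnd ℂ) (V 0 j) * V 0 j) * hsq2
  -- moduli of the first row/column
  have qa : ∀ i : Fin 3, (starRingEnd ℂ) (U 0 i) * U 0 i = 1/3 := by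
    intro i
    linear_combination (1/3 : ℂ) * hUc i + (1/3 : ℂ) * (key i 0 + key i 1 + key i 2)
      - (2 * ((starRingEnd ℂ) (U 0 i) * U 0 i) / 3) * hVr00
      + (((starRingEnd ℂ) (U 1 i) * U 1 i) / 3) * hVr11 + (((starRingEnd ℂ) (U 1 i) * U 2 i) / 3) * hVr12
      + (((starRingEnd ℂ) (U 2 i) * U 1 i) / 3) * hVr21 + (((starRingEnd ℂ) (U 2 i) * U 2 i) / 3) * hVr22
  have qb : ∀ j : Fin 3, (starRingEnd ℂ) (V 0 j) * V 0 j = 1/3 := by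
    intro j
    linear_combination (1/3 : ℂ) * hVc j + (1/3 : ℂ) * (key 0 j + key 1 j + key 2 j)
      - (2 * ((starRingEnd ℂ) (V 0 j) * V 0 j) / 3) * hUr00
      + ((V 1 j * (starRingEnd ℂ) (V 1 j)) / 3) * hUr11 + ((V 1 j * (starRingEnd ℂ) (V 2 j)) / 3) * hUr21
      + ((V 2 j * (starRingEnd ℂ) (V 1 j)) / 3) * hUr12 + ((V 2 j * (starRingEnd ℂ) (V 2 j)) / 3) * hUr22
  have wkey : ∀ i j : Fin 3,
      ((starRingEnd ℂ) (U 1 i) * V 1 j + (starRingEnd ℂ) (U 2 i) * V 2 j) *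
      (U 1 i * (starRingEnd ℂ) (V 1 j) + U 2 i * (starRingEnd ℂ) (V 2 j)) = 2/9 := by
    intro i j
    linear_combination -key i j + 2 * ((starRingEnd ℂ) (V 0 j) * V 0 j) * qa i + (2/3 : ℂ) * qb j
  have norm2a : ∀ i : Fin 3, (starRingEnd ℂ) (U 1 i) * U 1 i + (starRingEnd ℂ) (U 2 i) * U 2 i = 2/3 := by
    intro i
    linear_combination hUc i - qa i
  have norm2b : ∀ j : Fin 3, (starRingEnd ℂ) (V 1 j) * V 1 j + (starRingEnd ℂ) (V 2 j) * V 2 j = 2/3 := by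
    intro j
    linear_combination hVc j - qb j
  -- complex Bloch-orthogonality
  have orthC : ∀ i j : Fin 3, ((starRingEnd ℂ) (U 1 i) * U 1 i - (starRingEnd ℂ) (U 2 i) * U 2 i) * ((starRingEnd ℂ) (V 1 j) * V 1 j - (starRingEnd ℂ) (V 2 j) * V 2 j)
      + 2 * (((starRingEnd ℂ) (U 1 i) * U 2 i) * (V 1 j * (starRingEnd ℂ) (V 2 j)) + (U 1 i * (starRingEnd ℂ) (U 2 i)) * ((starRingEnd ℂ) (V 1 j) * V 2 j)) = 0 := by
    intro i j
    linear_combination 2 * wkey i j - ((starRingEnd ℂ) (U 1 i) * U 1 i + (starRingEnd ℂ) (U 2 i) * U 2 i) * norm2b j - (2/3 : ℂ) * norm2a i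
  -- complex Bloch norms
  have nrmCa : ∀ i : Fin 3, ((starRingEnd ℂ) (U 1 i) * U 1 i - (starRingEnd ℂ) (U 2 i) * U 2 i) * ((starRingEnd ℂ) (U 1 i) * U 1 i - (starRingEnd ℂ) (U 2 i) * U 2 i) + 4 * ((starRingEnd ℂ) (U 1 i) * U 2 i) * (U 1 i * (starRingEnd ℂ) (U 2 i)) = ((4/9 : ℝ) : ℂ) := by
    intro i
    have h : ((starRingEnd ℂ) (U 1 i) * U 1 i - (starRingEnd ℂ) (U 2 i) * U 2 i) * ((starRingEnd ℂ) (U 1 i) * U 1 i - (starRingEnd ℂ) (U 2 i) * U 2 i) + 4 * ((starRingEnd ℂ) (U 1 i) * U 2 i) * (U 1 i * (starRingEnd ℂ) (U 2 i)) = 4/9 := by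
      linear_combination ((starRingEnd ℂ) (U 1 i) * U 1 i + (starRingEnd ℂ) (U 2 i) * U 2 i + 2/3) * norm2a i
    rw [h]; norm_num
  have nrmCb : ∀ j : Fin 3, ((starRingEnd ℂ) (V 1 j) * V 1 j - (starRingEnd ℂ) (V 2 j) * V 2 j) * ((starRingEnd ℂ) (V 1 j) * V 1 j - (starRingEnd ℂ) (V 2 j) * V 2 j) + 4 * ((starRingEnd ℂ) (V 1 j) * V 2 j) * (V 1 j * (starRingEnd ℂ) (V 2 j)) = ((4/9 : ℝ) : ℂ) := by
    intro j
    have h : ((starRingEnd ℂ) (V 1 j) * V 1 j - (starRingEnd ℂ) (V 2 j) * V 2 j) * ((starRingEnd ℂ) (V 1 j) * V 1 j - (starRingEnd ℂ) (V 2 j) * V 2 j) + 4 * ((starRingEnd ℂ) (V 1 j) * V 2 j) * (V 1 j * (starRingEnd ℂ) (V 2 j)) = 4/9 := by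
      linear_combination (V 1 j * (starRingEnd ℂ) (V 1 j) + V 2 j * (starRingEnd ℂ) (V 2 j) + 2/3) * norm2b j
    rw [h]; norm_num
  -- complex Bloch sums
  have sumpa : ((starRingEnd ℂ) (U 1 0) * U 2 0) + ((starRingEnd ℂ) (U 1 1) * U 2 1) + ((starRingEnd ℂ) (U 1 2) * U 2 2) = 0 := by
    linear_combination hUr21
  have sumza : ((starRingEnd ℂ) (U 1 0) * U 1 0 - (starRingEnd ℂ) (U 2 0) * U 2 0) + ((starRingEnd ℂ) (U 1 1) * U 1 1 - (starRingEnd ℂ) (U 2 1) * U 2 1) + ((starRingEnd ℂ) (U 1 2) * U 1 2 - (starRingEnd ℂ) (U 2 2) * U 2 2) = 0 := by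
    linear_combination hUr11 - hUr22
  have sumpb : ((starRingEnd ℂ) (V 1 0) * V 2 0) + ((starRingEnd ℂ) (V 1 1) * V 2 1) + ((starRingEnd ℂ) (V 1 2) * V 2 2) = 0 := by
    linear_combination hVr21
  have sumzb : ((starRingEnd ℂ) (V 1 0) * V 1 0 - (starRingEnd ℂ) (V 2 0) * V 2 0) + ((starRingEnd ℂ) (V 1 1) * V 1 1 - (starRingEnd ℂ) (V 2 1) * V 2 1) + ((starRingEnd ℂ) (V 1 2) * V 1 2 - (starRingEnd ℂ) (V 2 2) * V 2 2) = 0 := by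
    linear_combination hVr11 - hVr22
  -- realification
  have hNA : ∀ i : Fin 3, (2 * (((starRingEnd ℂ) (U 1 i) * U 2 i)).re)^2 + (2 * (((starRingEnd ℂ) (U 1 i) * U 2 i)).im)^2 + ((((starRingEnd ℂ) (U 1 i) * U 1 i - (starRingEnd ℂ) (U 2 i) * U 2 i)).re)^2 = 4/9 := by
    intro i
    have h := congrArg Complex.re (nrmCa i)
    simp only [Complex.add_re, Complex.add_im, Complex.sub_re, Complex.sub_im, Complex.mul_re,
      Complex.mul_im, Complex.conj_re, Complex.conj_im, Complex.ofReal_re, Complex.ofReal_im,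
      Complex.re_ofNat, Complex.im_ofNat, Complex.zero_re, Complex.zero_im] at h
    simp only [Complex.add_re, Complex.add_im, Complex.sub_re, Complex.sub_im, Complex.mul_re,
      Complex.mul_im, Complex.conj_re, Complex.conj_im]
    linear_combination h
  have hNB : ∀ j : Fin 3, (2 * (((starRingEnd ℂ) (V 1 j) * V 2 j)).re)^2 + (2 * (((starRingEnd ℂ) (V 1 j) * V 2 j)).im)^2 + ((((starRingEnd ℂ) (V 1 j) * V 1 j - (starRingEnd ℂ) (V 2 j) * V 2 j)).re)^2 = 4/9 := by
    intro j
    have h := congrArg Complex.re (nrmCb j)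
    simp only [Complex.add_re, Complex.add_im, Complex.sub_re, Complex.sub_im, Complex.mul_re,
      Complex.mul_im, Complex.conj_re, Complex.conj_im, Complex.ofReal_re, Complex.ofReal_im,
      Complex.re_ofNat, Complex.im_ofNat, Complex.zero_re, Complex.zero_im] at h
    simp only [Complex.add_re, Complex.add_im, Complex.sub_re, Complex.sub_im, Complex.mul_re,
      Complex.mul_im, Complex.conj_re, Complex.conj_im]
    linear_combination h
  have hOrth : ∀ i j : Fin 3, (2 * (((starRingEnd ℂ) (U 1 i) * U 2 i)).re) * (2 * (((starRingEnd ℂ) (V 1 j) * V 2 j)).re)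
      + (2 * (((starRingEnd ℂ) (U 1 i) * U 2 i)).im) * (2 * (((starRingEnd ℂ) (V 1 j) * V 2 j)).im)
      + ((((starRingEnd ℂ) (U 1 i) * U 1 i - (starRingEnd ℂ) (U 2 i) * U 2 i)).re) * ((((starRingEnd ℂ) (V 1 j) * V 1 j - (starRingEnd ℂ) (V 2 j) * V 2 j)).re) = 0 := by
    intro i j
    have h := congrArg Complex.re (orthC i j)
    simp only [Complex.add_re, Complex.add_im, Complex.sub_re, Complex.sub_im, Complex.mul_re,
      Complex.mul_im, Complex.conj_re, Complex.conj_im, Complex.ofReal_re, Complex.ofReal_im,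
      Complex.re_ofNat, Complex.im_ofNat, Complex.zero_re, Complex.zero_im] at h
    simp only [Complex.add_re, Complex.add_im, Complex.sub_re, Complex.sub_im, Complex.mul_re,
      Complex.mul_im, Complex.conj_re, Complex.conj_im]
    linear_combination h
  have hSAX : 2 * (((starRingEnd ℂ) (U 1 0) * U 2 0)).re + 2 * (((starRingEnd ℂ) (U 1 1) * U 2 1)).re + 2 * (((starRingEnd ℂ) (U 1 2) * U 2 2)).re = 0 := by
    have h := congrArg Complex.re sumpa
    simp only [Complex.add_re, Complex.zero_re] at h
    linear_combination 2 * h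
  have hSAY : 2 * (((starRingEnd ℂ) (U 1 0) * U 2 0)).im + 2 * (((starRingEnd ℂ) (U 1 1) * U 2 1)).im + 2 * (((starRingEnd ℂ) (U 1 2) * U 2 2)).im = 0 := by
    have h := congrArg Complex.im sumpa
    simp only [Complex.add_im, Complex.zero_im] at h
    linear_combination 2 * h
  have hSAZ : (((starRingEnd ℂ) (U 1 0) * U 1 0 - (starRingEnd ℂ) (U 2 0) * U 2 0)).re + (((starRingEnd ℂ) (U 1 1) * U 1 1 - (starRingEnd ℂ) (U 2 1) * U 2 1)).re + (((starRingEnd ℂ) (U 1 2) * U 1 2 - (starRingEnd ℂ) (U 2 2) * U 2 2)).re = 0 := by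
    have h := congrArg Complex.re sumza
    simp only [Complex.add_re, Complex.zero_re] at h
    linear_combination h
  have hSBX : 2 * (((starRingEnd ℂ) (V 1 0) * V 2 0)).re + 2 * (((starRingEnd ℂ) (V 1 1) * V 2 1)).re + 2 * (((starRingEnd ℂ) (V 1 2) * V 2 2)).re = 0 := by
    have h := congrArg Complex.re sumpb
    simp only [Complex.add_re, Complex.zero_re] at h
    linear_combination 2 * h
  have hSBY : 2 * (((starRingEnd ℂ) (V 1 0) * V 2 0)).im + 2 * (((starRingEnd ℂ) (V 1 1) * V 2 1)).im + 2 * (((starRingEnd ℂ) (V 1 2) * V 2 2)).im = 0 := by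
    have h := congrArg Complex.im sumpb
    simp only [Complex.add_im, Complex.zero_im] at h
    linear_combination 2 * h
  have hSBZ : (((starRingEnd ℂ) (V 1 0) * V 1 0 - (starRingEnd ℂ) (V 2 0) * V 2 0)).re + (((starRingEnd ℂ) (V 1 1) * V 1 1 - (starRingEnd ℂ) (V 2 1) * V 2 1)).re + (((starRingEnd ℂ) (V 1 2) * V 1 2 - (starRingEnd ℂ) (V 2 2) * V 2 2)).re = 0 := by
    have h := congrArg Complex.re sumzb
    simp only [Complex.add_re, Complex.zero_re] at h
    linear_combination h
  exact aux_bloch _ _ _ _ _ _ _ _ _ _ _ _ _ _ _ _ _ _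
    (hNA 0) (hNA 1) (hNA 2) (hNB 0) (hNB 1) (hNB 2)
    hSAX hSAY hSAZ hSBX hSBY hSBZ
    (hOrth 0 0) (hOrth 0 1) (hOrth 1 0) (hOrth 1 1)
end
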